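/- arXiv:1508.05173 — 14 statements merged into one kernel-verified Lean document; each statement's English description precedes it below -/
import Mathlib

section
/- A metric space (X,ρ) is complete if and only if for every nonempty closed subset Y of X, every contraction f : Y → Y has a fixed point in Y. -/
open scoped Classical

/-- A metric space `(X,ρ)` is complete if and only if for every nonempty closed subset
`Y` of `X`, every contraction `f : Y → Y` has a fixed point in `Y`. -/
theorem complete_iff_closed_subsets_contraction_fixedPoint
    {X : Type*} [MetricSpace X] :
    CompleteSpace X ↔
      ∀ Y : Set X, Y.Nonempty → IsClosed Y →
        ∀ f : Y → Y,
          (∃ α : ℝ, 0 ≤ α ∧ α < 1 ∧ ∀ x y : Y, dist (f x) (f y) ≤ α * dist x y) →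
          ∃ x : Y, f x = x := by
  constructor
  · rintro hc Y hne hYc f ⟨α, hα0, hα1, hf⟩
    haveI := hYc.completeSpace_coe
    haveI := hne.to_subtype
    have hcw : ContractingWith ⟨α, hα0⟩ f := by
      constructor
      · exact_mod_cast hα1
      · exact LipschitzWith.of_dist_le_mul hf
    exact ⟨ContractingWith.fixedPoint f hcw, hcw.fixedPoint_isFixedPt⟩
  · intro H
    apply Metric.complete_of_cauchySeq_tendsto
    intro u hu
    by_contra hnot
    push_neg at hnot
    -- every point is eventually far from the sequence
    have far : ∀ x : X, ∃ ε > 0, ∃ N, ∀ m ≥ N, ε ≤ dist (u m) x := by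
      intro x
      have h := hnot x
      rw [Metric.tendsto_atTop] at h
      push_neg at h
      obtain ⟨ε, hε, hfar⟩ := h
      obtain ⟨N₀, hN₀⟩ := Metric.cauchySeq_iff.mp hu (ε / 2) (by linarith)
      obtain ⟨m, hm, hmx⟩ := hfar N₀
      refine ⟨ε / 2, by linarith, N₀, fun k hk => ?_⟩
      have h1 := hN₀ m hm k hk
      have h2 := dist_triangle (u m) (u k) x
      linarith
    -- the range of u is closed
    have hclosed : IsClosed (Set.range u) := by
      refine isClosed_of_closure_subset ?_
      intro x hx
      by_contra hxr
      apply hnot x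
      rw [Metric.tendsto_atTop]
      intro δ hδ
      obtain ⟨N₀, hN₀⟩ := Metric.cauchySeq_iff.mp hu (δ / 2) (by linarith)
      have hfreq : ∃ n ≥ N₀, dist (u n) x < δ / 2 := by
        set F : Finset ℝ :=
          insert (δ / 2) ((Finset.range N₀).image fun m => dist (u m) x) with hF
        have hFne : F.Nonempty := ⟨δ / 2, Finset.mem_insert_self _ _⟩
        have hc0 : 0 < F.min' hFne := by
          have hall : ∀ a ∈ F, 0 < a := by
            intro a ha
            rw [hF] at ha
            rcases Finset.mem_insert.mp ha with h | h
            · subst h; linarith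
            · obtain ⟨m, _, hm⟩ := Finset.mem_image.mp h
              rw [← hm]
              exact dist_pos.mpr fun he => hxr ⟨m, he⟩
          exact hall _ (F.min'_mem hFne)
        obtain ⟨y, ⟨m, rfl⟩, hy⟩ := Metric.mem_closure_iff.mp hx _ hc0
        have hdm : dist (u m) x < F.min' hFne := by rwa [dist_comm] at hy
        refine ⟨m, ?_, ?_⟩
        · by_contra h
          push_neg at h
          have : dist (u m) x ∈ F := by
            rw [hF]
            exact Finset.mem_insert_of_mem
              (Finset.mem_image.mpr ⟨m, Finset.mem_range.mpr h, rfl⟩)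
          exact absurd hdm (not_lt.mpr (F.min'_le _ this))
        · have : F.min' hFne ≤ δ / 2 := F.min'_le _ (Finset.mem_insert_self _ _)
          linarith
      obtain ⟨n, hn, hnx⟩ := hfreq
      refine ⟨N₀, fun m hm => ?_⟩
      have h1 := hN₀ m hm n hn
      have h2 := dist_triangle (u m) (u n) x
      linarith
    choose ε hε N hN using far
    -- separation radius r n : every point of the sequence different from u n is at
    -- distance ≥ r n from u n
    set F : ℕ → Finset ℕ :=
      fun n => (Finset.range (N (u n))).filter (fun m => u m ≠ u n) with hFdef
    set r : ℕ → ℝ := fun n =>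
      if h : (F n).Nonempty then
        min (ε (u n)) ((F n).inf' h (fun m => dist (u m) (u n)))
      else ε (u n) with hrdef
    have hr0 : ∀ n, 0 < r n := by
      intro n
      rw [hrdef]
      dsimp only
      split_ifs with h
      · refine lt_min (hε (u n)) ?_
        rw [Finset.lt_inf'_iff]
        intro m hm
        have : u m ≠ u n := (Finset.mem_filter.mp hm).2
        exact dist_pos.mpr this
      · exact hε (u n)
    have hrd : ∀ n k, u k ≠ u n → r n ≤ dist (u k) (u n) := by
      intro n k hk
      rw [hrdef]
      dsimp only
      rcases le_or_gt (N (u n)) k with h | h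
      · have := hN (u n) k h
        split_ifs with hh
        · exact le_trans (min_le_left _ _) this
        · exact this
      · have hkF : k ∈ F n := Finset.mem_filter.mpr ⟨Finset.mem_range.mpr h, hk⟩
        have hFne : (F n).Nonempty := ⟨k, hkF⟩
        rw [dif_pos hFne]
        exact le_trans (min_le_right _ _) (Finset.inf'_le _ hkF)
    -- choose the jump map σ
    have hσ : ∀ n, ∃ s, N (u n) ≤ s ∧
        ∀ m ≥ s, ∀ l ≥ s, dist (u m) (u l) < r n / 2 := by
      intro n
      obtain ⟨N₀, hN₀⟩ := Metric.cauchySeq_iff.mp hu (r n / 2) (by linarith [hr0 n])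
      exact ⟨max N₀ (N (u n)), le_max_right _ _,
        fun m hm l hl => hN₀ m (le_trans (le_max_left _ _) hm) l
          (le_trans (le_max_left _ _) hl)⟩
    choose σ hσN hσc using hσ
    have hσne : ∀ n, u (σ n) ≠ u n := by
      intro n h
      have := hN (u n) (σ n) (hσN n)
      rw [h, dist_self] at this
      exact absurd this (not_le.mpr (hε (u n)))
    -- the set and the contraction
    set Y : Set X := Set.range u with hYdef
    have hYne : Y.Nonempty := ⟨u 0, 0, rfl⟩
    let idx : Y → ℕ := fun y => Nat.find y.2
    have hidx : ∀ y : Y, u (idx y) = ↑y := fun y => Nat.find_spec y.2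
    let f : Y → Y := fun y => ⟨u (σ (idx y)), Set.mem_range_self _⟩
    have key : ∀ x y : Y, dist (f x) (f y) ≤ (1/2 : ℝ) * dist x y := by
      intro x y
      by_cases hxy : (x : X) = y
      · have : x = y := Subtype.ext hxy
        subst this
        simp
      · have hne' : u (idx x) ≠ u (idx y) := by rw [hidx, hidx]; exact hxy
        have h1 : r (idx x) ≤ dist (u (idx y)) (u (idx x)) := hrd _ _ hne'.symm
        have h2 : r (idx y) ≤ dist (u (idx x)) (u (idx y)) := hrd _ _ hne'
        have hfd : dist (f x) (f y) = dist (u (σ (idx x))) (u (σ (idx y))) :=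
          Subtype.dist_eq _ _
        have hd : dist (x : X) (y : X) = dist (u (idx x)) (u (idx y)) := by
          rw [hidx, hidx]
        rw [hfd, Subtype.dist_eq x y, hd]
        rcases le_total (σ (idx x)) (σ (idx y)) with h | h
        · have hb := hσc (idx x) (σ (idx x)) le_rfl (σ (idx y)) h
          have : dist (u (idx y)) (u (idx x)) = dist (u (idx x)) (u (idx y)) :=
            dist_comm _ _
          linarith
        · have hb := hσc (idx y) (σ (idx x)) h (σ (idx y)) le_rfl
          linarith
    obtain ⟨x, hx⟩ := H Y hYne hclosed f ⟨1/2, by norm_num, by norm_num, key⟩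
    have hval : u (σ (idx x)) = (x : X) := congrArg Subtype.val hx
    rw [← hidx x] at hval
    exact hσne (idx x) hval
end

section
/- Let (X,ρ) be a metric space such that every mapping f : X → X satisfying (i) there exists α > 0 with ρ(f(x),f(y)) ≤ α·max{ρ(x,f(x)), ρ(y,f(y))} for all x,y ∈ X, and (ii) the image f(X) is countable, has a fixed point. Then (X,ρ) is complete. -/
/-- Subrahmanyam: a metric space `(X,ρ)` in which every mapping `f : X → X` satisfying
(i) `ρ(f(x),f(y)) ≤ α·max{ρ(x,f(x)), ρ(y,f(y))}` for some `α > 0` and all `x,y`, and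
(ii) `f(X)` countable, has a fixed point, is complete. -/
theorem subrahmanyam_completeness {X : Type*} [MetricSpace X]
    (h : ∀ f : X → X,
      (∃ α : ℝ, 0 < α ∧ ∀ x y : X,
        dist (f x) (f y) ≤ α * max (dist x (f x)) (dist y (f y))) →
      (Set.range f).Countable →
      ∃ x, f x = x) :
    CompleteSpace X := by
  apply Metric.complete_of_cauchySeq_tendsto
  intro u hu
  by_contra hnc
  push_neg at hnc
  -- the limit function φ
  have key : ∀ x : X, ∃ L : ℝ, Filter.Tendsto (fun n => dist x (u n)) Filter.atTop (nhds L) := by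
    intro x
    apply cauchySeq_tendsto_of_complete
    exact ((LipschitzWith.dist_right x).uniformContinuous.comp_cauchySeq hu)
  choose φ hφ using key
  have hφpos : ∀ x, 0 < φ x := by
    intro x
    rcases lt_or_eq_of_le (ge_of_tendsto (hφ x) (Filter.Eventually.of_forall fun n => dist_nonneg)) with hlt | heq
    · exact hlt
    · exfalso
      apply hnc x
      apply tendsto_iff_dist_tendsto_zero.2
      simpa [dist_comm, ← heq] using hφ x
  -- choose N x
  have hN : ∀ x : X, ∃ N : ℕ, ∀ m ≥ N, ∀ k ≥ N, dist (u m) (u k) ≤ φ x / 4 := by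
    intro x
    rcases Metric.cauchySeq_iff.1 hu (φ x / 4) (by linarith [hφpos x]) with ⟨N, hN⟩
    exact ⟨N, fun m hm k hk => (hN m hm k hk).le⟩
  choose N hNspec using hN
  set f : X → X := fun x => u (N x) with hf
  -- lower bound
  have hlow : ∀ x, 3 / 4 * φ x ≤ dist x (f x) := by
    intro x
    have : φ x ≤ dist x (f x) + φ x / 4 := by
      apply le_of_tendsto (hφ x)
      filter_upwards [Filter.eventually_ge_atTop (N x)] with m hm
      calc dist x (u m) ≤ dist x (f x) + dist (f x) (u m) := dist_triangle _ _ _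
        _ ≤ dist x (f x) + φ x / 4 := by
            have := hNspec x (N x) le_rfl m hm
            linarith
    linarith
  -- f satisfies hypothesis (i)
  have hi : ∀ x y : X, dist (f x) (f y) ≤ 1 * max (dist x (f x)) (dist y (f y)) := by
    intro x y
    rw [one_mul]
    rcases le_total (N x) (N y) with hle | hle
    · have h1 : dist (u (N x)) (u (N y)) ≤ φ x / 4 := hNspec x (N x) le_rfl (N y) hle
      have := hlow x
      calc dist (f x) (f y) ≤ φ x / 4 := h1
        _ ≤ dist x (f x) := by linarith [hφpos x]
        _ ≤ _ := le_max_left _ _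
    · have h1 : dist (u (N x)) (u (N y)) ≤ φ y / 4 := hNspec y (N x) hle (N y) le_rfl
      have := hlow y
      calc dist (f x) (f y) ≤ φ y / 4 := h1
        _ ≤ dist y (f y) := by linarith [hφpos y]
        _ ≤ _ := le_max_right _ _
  have hcount : (Set.range f).Countable := by
    apply (Set.countable_range u).mono
    rintro _ ⟨x, rfl⟩
    exact ⟨N x, rfl⟩
  rcases h f ⟨1, one_pos, hi⟩ hcount with ⟨z, hz⟩
  have h1 := hlow z
  have h2 : dist z (f z) = 0 := by rw [hz]; simp
  linarith [hφpos z]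
end

section
/- Let X = {(x, sin(1/x)) : x ∈ (0,1]} ⊆ ℝ², equipped with the Euclidean metric of ℝ². Then every contraction f : X → X has a fixed point (even though X is not a closed, hence not a complete, subset of ℝ²). -/
/-- The topologist's sine curve `{(x, sin(1/x)) : x ∈ (0,1]}` as a subset of the
Euclidean plane. -/
def sineCurve : Set (EuclideanSpace ℝ (Fin 2)) :=
  {p | ∃ x ∈ Set.Ioc (0:ℝ) 1, p 0 = x ∧ p 1 = Real.sin (1 / x)}

/-!
Read a continuous self-map `f` of the curve on the first coordinate, as a map `g` of `(0, 1]`.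
If `f` has no fixed point, neither has `g`; as `g 1 < 1` and `(0, 1]` is connected, `g t < t`
for all `t`. So for every `s ∈ (0, 1]` the image `g (0, s]` is an interval from below `peak (k+1)`
to above `peak k` for some `k`, where `peak k = 1 / (π / 2 + k π)` and `sin (1 / peak k) = (-1) ^ k`.
This gives two points above `(0, s]`, at distance at most `s + 2`, whose images are at distance
at least `2`; for `s = 1 - α` this is impossible when `f` contracts by `α < 1`.
-/

open Set Real Filter Topology

theorem EuclideanSpace.dist_le_sum_dist {ι : Type*} [Fintype ι] (x y : EuclideanSpace ℝ ι) :
    dist x y ≤ ∑ i, dist (x i) (y i) := by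
  rw [EuclideanSpace.dist_eq, sqrt_le_left (by positivity)]
  exact Finset.sum_sq_le_sq_sum_of_nonneg fun _ _ => dist_nonneg

namespace sineCurve

noncomputable def param (t : ℝ) : EuclideanSpace ℝ (Fin 2) := !₂[t, sin (1 / t)]

@[simp] theorem param_apply_zero (t : ℝ) : param t 0 = t := rfl

@[simp] theorem param_apply_one (t : ℝ) : param t 1 = sin (1 / t) := rfl

theorem param_mem {t : ℝ} (ht : t ∈ Ioc 0 1) : param t ∈ sineCurve :=
  ⟨t, ht, rfl, rfl⟩

theorem eq_param {p : EuclideanSpace ℝ (Fin 2)} (hp : p ∈ sineCurve) :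
    p 0 ∈ Ioc 0 1 ∧ p = param (p 0) := by
  obtain ⟨t, ht, h0, h1⟩ := hp
  refine ⟨h0 ▸ ht, ?_⟩
  ext i
  fin_cases i <;> simp [h0, h1]

theorem continuousOn_param : ContinuousOn param {0}ᶜ := by
  refine (PiLp.continuous_toLp 2 _).comp_continuousOn (continuousOn_pi.2 fun i => ?_)
  fin_cases i
  · exact continuousOn_id
  · exact continuous_sin.comp_continuousOn (continuousOn_const.div continuousOn_id fun _ h => h)

theorem dist_param_le (s t : ℝ) : dist (param s) (param t) ≤ |s - t| + 2 := by
  have hsin : dist (sin (1 / s)) (sin (1 / t)) ≤ 2 := by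
    rw [dist_eq]
    linarith [abs_sub (sin (1 / s)) (sin (1 / t)), abs_sin_le_one (1 / s), abs_sin_le_one (1 / t)]
  calc dist (param s) (param t) ≤ dist s t + dist (sin (1 / s)) (sin (1 / t)) := by
        simpa [Fin.sum_univ_two] using EuclideanSpace.dist_le_sum_dist (param s) (param t)
    _ ≤ |s - t| + 2 := by rw [dist_eq s t]; linarith

noncomputable def peak (k : ℕ) : ℝ := (π / 2 + k * π)⁻¹

theorem peak_pos (k : ℕ) : 0 < peak k := by
  unfold peak
  positivity

theorem peak_succ_lt (k : ℕ) : peak (k + 1) < peak k := by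
  unfold peak
  gcongr
  omega

theorem tendsto_peak : Tendsto peak atTop (𝓝 0) :=
  tendsto_inv_atTop_zero.comp <|
    tendsto_atTop_add_const_left _ _ (tendsto_natCast_atTop_atTop.atTop_mul_const pi_pos)

theorem sin_inv_peak (k : ℕ) : sin (1 / peak k) = (-1) ^ k := by
  rw [one_div, peak, inv_inv, sin_add_nat_mul_pi, sin_pi_div_two, mul_one]

theorem two_le_dist_param_peak (k : ℕ) :
    2 ≤ dist (param (peak k)) (param (peak (k + 1))) := by
  have h := PiLp.dist_apply_le (param (peak k)) (param (peak (k + 1))) 1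
  rw [param_apply_one, param_apply_one, sin_inv_peak, sin_inv_peak, dist_eq, pow_succ] at h
  rcases neg_one_pow_eq_or ℝ k with hk | hk <;> rw [hk] at h <;> norm_num at h <;> linarith

/-- The value `param 1` outside `(0, 1]` is junk. -/
noncomputable def point (t : ℝ) : sineCurve :=
  if ht : t ∈ Ioc 0 1 then ⟨param t, param_mem ht⟩ else ⟨param 1, param_mem ⟨one_pos, le_rfl⟩⟩

theorem coe_point {t : ℝ} (ht : t ∈ Ioc 0 1) :
    (point t : EuclideanSpace ℝ (Fin 2)) = param t := by
  simp [point, ht]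

theorem continuousOn_point : ContinuousOn point (Ioc 0 1) := by
  rw [continuousOn_iff_continuous_domRestrict]
  have : (Ioc 0 1).domRestrict point = fun t => ⟨param t, param_mem t.2⟩ := by
    funext t
    exact Subtype.ext (coe_point t.2)
  rw [this]
  exact (continuousOn_param.mono fun t ht => ht.1.ne').domRestrict.subtype_mk _

theorem dist_point_le {s x y : ℝ} (hs : s ≤ 1) (hx : x ∈ Ioc 0 s) (hy : y ∈ Ioc 0 s) :
    dist (point x) (point y) ≤ s + 2 := by
  rw [Subtype.dist_eq, coe_point (Ioc_subset_Ioc_right hs hx),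
    coe_point (Ioc_subset_Ioc_right hs hy)]
  have : |x - y| ≤ s := abs_sub_le_of_nonneg_of_le hx.1.le hx.2 hy.1.le hy.2
  linarith [dist_param_le x y]

section SelfMap

variable (f : sineCurve → sineCurve)

noncomputable def inducedMap (t : ℝ) : ℝ := (f (point t) : EuclideanSpace ℝ (Fin 2)) 0

variable {f}

theorem inducedMap_mem (t : ℝ) : inducedMap f t ∈ Ioc 0 1 :=
  (eq_param (f (point t)).2).1

theorem coe_apply_point (t : ℝ) :
    (f (point t) : EuclideanSpace ℝ (Fin 2)) = param (inducedMap f t) :=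
  (eq_param (f (point t)).2).2

theorem continuousOn_inducedMap (hf : Continuous f) : ContinuousOn (inducedMap f) (Ioc 0 1) :=
  (PiLp.continuous_apply 2 _ 0).comp_continuousOn
    (continuous_subtype_val.comp_continuousOn (hf.comp_continuousOn continuousOn_point))

theorem inducedMap_lt (hf : Continuous f) (hfix : ∀ p, f p ≠ p) {t : ℝ} (ht : t ∈ Ioc 0 1) :
    inducedMap f t < t := by
  have hne : ∀ u ∈ Ioc (0 : ℝ) 1, inducedMap f u ≠ u := fun u hu hu' =>
    hfix (point u) (Subtype.ext (by rw [coe_apply_point, hu', coe_point hu]))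
  have h1 : (1 : ℝ) ∈ Ioc 0 1 := ⟨one_pos, le_rfl⟩
  by_contra! hle
  obtain ⟨u, hu, hu0⟩ := isPreconnected_Ioc.intermediate_value h1 ht
    ((continuousOn_inducedMap hf).sub continuousOn_id)
    ⟨sub_nonpos.2 (inducedMap_mem 1).2, sub_nonneg.2 hle⟩
  exact hne u hu (sub_eq_zero.1 hu0)

theorem exists_two_le_dist_apply_point (hf : Continuous f) (hfix : ∀ p, f p ≠ p) {s : ℝ}
    (hs : s ∈ Ioc 0 1) :
    ∃ x ∈ Ioc 0 s, ∃ y ∈ Ioc 0 s, 2 ≤ dist (f (point x)) (f (point y)) := by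
  have hsub : Ioc 0 s ⊆ Ioc (0 : ℝ) 1 := Ioc_subset_Ioc_right hs.2
  obtain ⟨k, hk⟩ : ∃ k, peak k < inducedMap f s :=
    (tendsto_peak.eventually (gt_mem_nhds (inducedMap_mem s).1)).exists
  have hpeak : peak (k + 1) < peak k := peak_succ_lt k
  have hmem : peak (k + 1) ∈ Ioc 0 s :=
    ⟨peak_pos _, by linarith [inducedMap_lt hf hfix hs]⟩
  have hlt := inducedMap_lt hf hfix (hsub hmem)
  have hIVT := isPreconnected_Ioc.intermediate_value hmem ⟨hs.1, le_rfl⟩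
    ((continuousOn_inducedMap hf).mono hsub)
  obtain ⟨x, hx, hx'⟩ := hIVT ⟨by linarith, hk.le⟩
  obtain ⟨y, hy, hy'⟩ := hIVT ⟨hlt.le, by linarith⟩
  refine ⟨x, hx, y, hy, ?_⟩
  rw [Subtype.dist_eq, coe_apply_point, coe_apply_point, hx', hy']
  exact two_le_dist_param_peak k

end SelfMap

end sineCurve

/-- Elekes: every contraction of the set `{(x, sin(1/x)) : x ∈ (0,1]} ⊆ ℝ²` (with the
Euclidean metric) into itself has a fixed point. -/
theorem sineCurve_contraction_fixedPoint
    (f : sineCurve → sineCurve)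
    (hf : ∃ α : ℝ, 0 ≤ α ∧ α < 1 ∧ ∀ x y : sineCurve, dist (f x) (f y) ≤ α * dist x y) :
    ∃ x : sineCurve, f x = x := by
  obtain ⟨α, hα0, hα1, hcontr⟩ := hf
  by_contra! hfix
  have hcont : Continuous f := (LipschitzWith.of_dist_le_mul (K := α.toNNReal) fun x y => by
    rw [Real.coe_toNNReal α hα0]
    exact hcontr x y).continuous
  have hs : 1 - α ∈ Ioc (0 : ℝ) 1 := ⟨by linarith, by linarith⟩
  obtain ⟨x, hx, y, hy, hxy⟩ := sineCurve.exists_two_le_dist_apply_point hcont hfix hs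
  refine lt_irrefl (2 : ℝ) ?_
  calc 2 ≤ dist (f (sineCurve.point x)) (f (sineCurve.point y)) := hxy
    _ ≤ α * dist (sineCurve.point x) (sineCurve.point y) := hcontr _ _
    _ ≤ α * (1 - α + 2) := by gcongr; exact sineCurve.dist_point_le hs.2 hx hy
    _ < 2 := by nlinarith
end

section
/- A metric space (X,ρ) is complete if and only if for every proper, lower semicontinuous, bounded from below function f : X → ℝ ∪ {+∞} and every ε > 0 there exists y_ε ∈ X such that (1) f(y_ε) ≤ inf f(X) + ε, and (2) f(y_ε) < f(y) + ε·ρ(y, y_ε) for all y ∈ X \ {y_ε}. -/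
/-!
If `X` is complete, start from a point `x₀` with `f x₀ < inf f + ε` and let `u (n+1)` almost
minimize `f` on `ekelandSet f ε (u n)`, the set of points below `u n` in the Brøndsted order
`z ≼ a ↔ f z + ε ρ(z, a) ≤ f a`. These sets are closed and nested, and almost minimality
makes their diameters tend to zero, so by Cantor's intersection theorem they meet in a point `y`;
transitivity of `≼` then forces `ekelandSet f ε y = {y}`, which is the strict inequality.

Conversely, for `p` in the completion of `X`, the point `y` given by the principle for
`x ↦ ρ(x, p)` and `ε = 1/2` satisfies `ρ(y, p) ≤ 3 ρ(z, p)` for all `z ∈ X`, so `y = p` by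
density: `X` is its own completion.
-/

open Filter Topology Metric UniformSpace

namespace EReal

theorem exists_lt_iInf_add {ι : Sort*} {g : ι → EReal} (htop : ⨅ i, g i ≠ ⊤)
    (hbot : ⨅ i, g i ≠ ⊥) {δ : ℝ} (hδ : 0 < δ) : ∃ i, g i < (⨅ i, g i) + δ := by
  apply iInf_lt_iff.mp
  lift ⨅ i, g i to ℝ using ⟨htop, hbot⟩ with m
  exact_mod_cast lt_add_of_pos_right m hδ

end EReal

section Ekeland

variable {X : Type*} [MetricSpace X] {f : X → EReal} {ε : ℝ} {a b z : X}

def ekelandSet (f : X → EReal) (ε : ℝ) (a : X) : Set X :=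
  {z | f z + ↑(ε * dist z a) ≤ f a}

theorem mem_ekelandSet_self : a ∈ ekelandSet f ε a := by
  simp [ekelandSet]

theorem le_of_mem_ekelandSet (hε : 0 ≤ ε) (hz : z ∈ ekelandSet f ε a) : f z ≤ f a :=
  le_trans (le_add_of_nonneg_right (by exact_mod_cast mul_nonneg hε dist_nonneg)) hz

theorem ekelandSet_subset (hε : 0 ≤ ε) (hb : b ∈ ekelandSet f ε a) :
    ekelandSet f ε b ⊆ ekelandSet f ε a := fun z hz =>
  calc f z + ↑(ε * dist z a)
      ≤ f z + ↑(ε * dist z b) + ↑(ε * dist b a) := by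
        rw [add_assoc, ← EReal.coe_add, ← mul_add]
        gcongr
        exact dist_triangle z b a
    _ ≤ f b + ↑(ε * dist b a) := by gcongr; exact hz
    _ ≤ f a := hb

theorem LowerSemicontinuous.isClosed_ekelandSet (hf : LowerSemicontinuous f) (a : X) :
    IsClosed (ekelandSet f ε a) := by
  have hcont : Continuous fun z => ((ε * dist z a : ℝ) : EReal) :=
    continuous_coe_real_ereal.comp (by fun_prop)
  exact (hf.add' hcont.lowerSemicontinuous fun z =>
    EReal.continuousAt_add (.inr (EReal.coe_ne_bot _)) (.inr (EReal.coe_ne_top _))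
    ).isClosed_preimage (f a)

theorem exists_mem_ekelandSet_subset_closedBall {c : ℝ} (hc : ∀ x, c ≤ f x) (hε : 0 < ε)
    (ha : f a ≠ ⊤) {r : ℝ} (hr : 0 < r) :
    ∃ b ∈ ekelandSet f ε a, f b ≠ ⊤ ∧ ekelandSet f ε b ⊆ closedBall b r := by
  set S := ekelandSet f ε a
  have hinf_top : ⨅ z : S, f z ≠ ⊤ :=
    ne_top_of_le_ne_top ha (iInf_le (fun z : S => f z) ⟨a, mem_ekelandSet_self⟩)
  have hinf_bot : ⨅ z : S, f z ≠ ⊥ :=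
    ne_bot_of_le_ne_bot (EReal.coe_ne_bot c) (le_iInf fun z => hc z)
  obtain ⟨⟨b, hb⟩, hb_min⟩ := EReal.exists_lt_iInf_add hinf_top hinf_bot (mul_pos hε hr)
  refine ⟨b, hb, ne_top_of_le_ne_top ha (le_of_mem_ekelandSet hε.le hb), fun z hz => ?_⟩
  have hzS : z ∈ S := ekelandSet_subset hε.le hb hz
  have hlt : f z + ↑(ε * dist z b) < f z + ↑(ε * r) :=
    calc f z + ↑(ε * dist z b) ≤ f b := hz
      _ < (⨅ z : S, f z) + ↑(ε * r) := hb_min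
      _ ≤ f z + ↑(ε * r) := by gcongr; exact iInf_le (fun z : S => f z) ⟨z, hzS⟩
  lift f z to ℝ using ⟨ne_top_of_le_ne_top ha (le_of_mem_ekelandSet hε.le hzS),
    ne_bot_of_le_ne_bot (EReal.coe_ne_bot c) (hc z)⟩ with w
  rw [mem_closedBall]
  exact le_of_mul_le_mul_left (le_of_add_le_add_left (α := ℝ) (by exact_mod_cast hlt.le)) hε

theorem exists_seq_ekelandSet {c : ℝ} (hc : ∀ x, c ≤ f x) (hε : 0 < ε) {x₀ : X}
    (hx₀ : f x₀ ≠ ⊤) {r : ℕ → ℝ} (hr : ∀ n, 0 < r n) :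
    ∃ u : ℕ → X, u 0 = x₀ ∧ ∀ n, u (n + 1) ∈ ekelandSet f ε (u n) ∧
      ekelandSet f ε (u (n + 1)) ⊆ closedBall (u (n + 1)) (r n) := by
  have step : ∀ n (a : {a // f a ≠ ⊤}), ∃ b : {b // f b ≠ ⊤},
      b.1 ∈ ekelandSet f ε a.1 ∧ ekelandSet f ε b.1 ⊆ closedBall b.1 (r n) := fun n a =>
    let ⟨b, hb, hb_top, hb_ball⟩ := exists_mem_ekelandSet_subset_closedBall hc hε a.2 (hr n)
    ⟨⟨b, hb_top⟩, hb, hb_ball⟩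
  choose next hnext using step
  let v : ℕ → {a // f a ≠ ⊤} := fun n => Nat.rec ⟨x₀, hx₀⟩ next n
  exact ⟨fun n => (v n).1, rfl, fun n => hnext n (v n)⟩

theorem LowerSemicontinuous.exists_forall_lt_add_mul_dist [CompleteSpace X]
    (hf : LowerSemicontinuous f) {c : ℝ} (hc : ∀ x, c ≤ f x) (hε : 0 < ε) {x₀ : X}
    (hx₀ : f x₀ ≠ ⊤) :
    ∃ y ∈ ekelandSet f ε x₀, ∀ z, z ≠ y → f y < f z + ↑(ε * dist z y) := by
  obtain ⟨u, rfl, hu⟩ := exists_seq_ekelandSet hc hε hx₀ (r := fun n => 1 / (n + 1))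
    fun n => Nat.one_div_pos_of_nat
  set T := fun n => ekelandSet f ε (u (n + 1))
  have hT_anti : Antitone T :=
    antitone_nat_of_succ_le fun n => ekelandSet_subset hε.le (hu (n + 1)).1
  have hT_bdd : ∀ n, Bornology.IsBounded (T n) := fun n => isBounded_closedBall.subset (hu n).2
  have hdiam : ∀ n, diam (T n) ≤ 2 * (1 / (n + 1)) := fun n =>
    (diam_mono (hu n).2 isBounded_closedBall).trans (diam_closedBall Nat.one_div_pos_of_nat.le)
  have hdiam_lim : Tendsto (fun n => diam (T n)) atTop (𝓝 0) :=
    squeeze_zero (fun n => diam_nonneg) hdiam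
      (by simpa using tendsto_one_div_add_atTop_nhds_zero_nat.const_mul (2 : ℝ))
  obtain ⟨y, hy⟩ := nonempty_iInter_of_nonempty_biInter (fun n => hf.isClosed_ekelandSet _)
    hT_bdd
    (fun N => ⟨u (N + 1), Set.mem_iInter₂.mpr fun n hn => hT_anti hn mem_ekelandSet_self⟩)
    hdiam_lim
  rw [Set.mem_iInter] at hy
  refine ⟨y, ekelandSet_subset hε.le (hu 0).1 (hy 0), fun z hzy => not_le.mp fun hz => hzy ?_⟩
  have hz_mem : ∀ n, z ∈ T n := fun n => ekelandSet_subset hε.le (hy n) hz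
  exact dist_le_zero.mp <| ge_of_tendsto' hdiam_lim fun n =>
    dist_le_diam_of_mem (hT_bdd n) (hz_mem n) (hy n)

end Ekeland

namespace UniformSpace.Completion

variable {X : Type*} [MetricSpace X]

theorem coe_eq_of_forall_dist_lt_add_half_dist {p : Completion X} {y : X}
    (hy : ∀ z, z ≠ y →
      dist (y : Completion X) p < dist (z : Completion X) p + 1 / 2 * dist z y) :
    (y : Completion X) = p := by
  have h_three : ∀ z : X, dist (y : Completion X) p ≤ 3 * dist (z : Completion X) p := by
    intro z
    rcases eq_or_ne z y with rfl | hzy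
    · linarith [dist_nonneg (x := (z : Completion X)) (y := p)]
    · have h_tri := dist_triangle (z : Completion X) p y
      rw [Completion.dist_eq, dist_comm p] at h_tri
      linarith [hy z hzy]
  refine dist_le_zero.mp (le_of_forall_pos_le_add fun η hη => ?_)
  obtain ⟨z, hz⟩ := Metric.denseRange_iff.mp denseRange_coe p (η / 3) (by positivity)
  linarith [h_three z, dist_comm p (z : Completion X)]

end UniformSpace.Completion

theorem completeSpace_of_forall_exists_dist_lt {X : Type*} [MetricSpace X]
    (H : ∀ p : Completion X, ∃ y : X, ∀ z, z ≠ y →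
      dist (y : Completion X) p < dist (z : Completion X) p + 1 / 2 * dist z y) :
    CompleteSpace X := by
  refine (completeSpace_iff_isComplete_range (Completion.isUniformInducing_coe X)).mpr ?_
  rw [Set.range_eq_univ.mpr fun p => ?_]
  · exact isComplete_univ
  obtain ⟨y, hy⟩ := H p
  exact ⟨y, Completion.coe_eq_of_forall_dist_lt_add_half_dist hy⟩

/-- Weston–Sullivan: a metric space `(X,ρ)` is complete if and only if for every proper,
lower semicontinuous, bounded below function `f : X → ℝ ∪ {+∞}` and every `ε > 0` there
exists `y_ε ∈ X` with `f(y_ε) ≤ inf f(X) + ε` and `f(y_ε) < f(y) + ε·ρ(y,y_ε)` for all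
`y ≠ y_ε` (the weak Ekeland variational principle). -/
theorem complete_iff_weak_ekeland {X : Type*} [MetricSpace X] :
    CompleteSpace X ↔
      ∀ f : X → EReal,
        (∃ x, f x ≠ ⊤) →
        LowerSemicontinuous f →
        (∃ c : ℝ, ∀ x, (c : EReal) ≤ f x) →
        ∀ ε : ℝ, 0 < ε →
          ∃ yε : X,
            f yε ≤ (⨅ x, f x) + (ε : EReal) ∧
            ∀ y : X, y ≠ yε → f yε < f y + ((ε * dist y yε : ℝ) : EReal) := by
  constructor
  · intro _ f ⟨x, hx⟩ hf ⟨c, hc⟩ ε hε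
    obtain ⟨x₀, hx₀⟩ := EReal.exists_lt_iInf_add (ne_top_of_le_ne_top hx (iInf_le f x))
      (ne_bot_of_le_ne_bot (EReal.coe_ne_bot c) (le_iInf hc)) hε
    obtain ⟨y, hy, hy_min⟩ := hf.exists_forall_lt_add_mul_dist hc hε hx₀.ne_top
    exact ⟨y, (le_of_mem_ekelandSet hε.le hy).trans hx₀.le, hy_min⟩
  · intro H
    refine completeSpace_of_forall_exists_dist_lt fun p => ?_
    obtain ⟨x, -⟩ := Metric.denseRange_iff.mp Completion.denseRange_coe p 1 one_pos
    obtain ⟨y, -, hy⟩ := H (fun x => (dist (x : Completion X) p : EReal))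
      ⟨x, EReal.coe_ne_top _⟩
      (continuous_coe_real_ereal.comp (by fun_prop)).lowerSemicontinuous
      ⟨0, fun x => EReal.coe_le_coe_iff.mpr dist_nonneg⟩ (1 / 2) (by norm_num)
    exact ⟨y, fun z hz => by exact_mod_cast hy z hz⟩
end

section
/- Let (X,ρ) be a metric space. If every mapping f : X → X for which there exists a lower semicontinuous, bounded from below function φ : X → ℝ with ρ(x, f(x)) ≤ φ(x) − φ(f(x)) for all x ∈ X has a fixed point, then the metric space (X,ρ) is complete. -/
/-- If in a metric space `(X,ρ)` every mapping `f : X → X` satisfying Caristi's condition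
`ρ(x,f(x)) ≤ φ(x) − φ(f(x))` for some lower semicontinuous bounded below function
`φ : X → ℝ` has a fixed point, then `X` is complete. -/
theorem caristi_fixedPoint_implies_complete {X : Type*} [MetricSpace X]
    (h : ∀ f : X → X,
      (∃ φ : X → ℝ, LowerSemicontinuous φ ∧ BddBelow (Set.range φ) ∧
        ∀ x, dist x (f x) ≤ φ x - φ (f x)) →
      ∃ x, f x = x) :
    CompleteSpace X := by
  apply Metric.complete_of_cauchySeq_tendsto
  intro u hu
  by_contra hne
  push_neg at hne
  -- φ x = lim_n dist x (u n)
  have key : ∀ x : X, ∃ L : ℝ,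
      Filter.Tendsto (fun n => dist x (u n)) Filter.atTop (nhds L) := by
    intro x
    apply cauchySeq_tendsto_of_complete
    exact ((LipschitzWith.dist_right x).uniformContinuous).comp_cauchySeq hu
  set φ : X → ℝ := fun x => (key x).choose with hφdef
  have hφ : ∀ x, Filter.Tendsto (fun n => dist x (u n)) Filter.atTop (nhds (φ x)) :=
    fun x => (key x).choose_spec
  have hφ0 : ∀ x, 0 ≤ φ x := fun x =>
    ge_of_tendsto' (hφ x) (fun n => dist_nonneg)
  -- φ is 1-Lipschitz
  have hlip : ∀ x y : X, φ x ≤ φ y + dist x y := by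
    intro x y
    have : Filter.Tendsto (fun n => dist y (u n) + dist x y) Filter.atTop
        (nhds (φ y + dist x y)) := (hφ y).add tendsto_const_nhds
    exact le_of_tendsto_of_tendsto' (hφ x) this (fun n => by
      have := dist_triangle x y (u n); linarith)
  have hcont : Continuous φ := by
    apply LipschitzWith.continuous (K := 1)
    intro x y
    rw [edist_dist, edist_dist]
    have h1 := hlip x y
    have h2 := hlip y x
    rw [ENNReal.coe_one, one_mul]
    apply ENNReal.ofReal_le_ofReal
    rw [dist_comm y x] at h2
    rw [Real.dist_eq, abs_le]
    constructor <;> linarith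
  -- φ (u n) → 0
  have hφu : Filter.Tendsto (fun n => φ (u n)) Filter.atTop (nhds 0) := by
    rw [Metric.tendsto_atTop]
    intro ε hε
    obtain ⟨N, hN⟩ := Metric.cauchySeq_iff.1 hu (ε/2) (by linarith)
    refine ⟨N, fun n hn => ?_⟩
    have hle : φ (u n) ≤ ε / 2 := by
      apply le_of_tendsto (hφ (u n))
      filter_upwards [Filter.eventually_ge_atTop N] with m hm
      exact le_of_lt (hN n hn m hm)
    rw [Real.dist_eq, sub_zero, abs_of_nonneg (hφ0 _)]
    linarith
  -- φ is positive everywhere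
  have hpos : ∀ x, 0 < φ x := by
    intro x
    rcases lt_or_eq_of_le (hφ0 x) with h' | h'
    · exact h'
    · exfalso
      apply hne x
      apply tendsto_iff_dist_tendsto_zero.2
      have := hφ x
      rw [← h'] at this
      simpa [dist_comm] using this
  -- choose f x among the u n
  have hchoose : ∀ x : X, ∃ n, dist x (u n) < 2 * φ x ∧ φ (u n) < φ x / 2 := by
    intro x
    have h1 : ∀ᶠ n in Filter.atTop, dist x (u n) < 2 * φ x :=
      (hφ x).eventually (Filter.Tendsto.eventually_lt_const (by linarith [hpos x]) Filter.tendsto_id)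
    have h2 : ∀ᶠ n in Filter.atTop, φ (u n) < φ x / 2 :=
      hφu.eventually (Filter.Tendsto.eventually_lt_const (by linarith [hpos x]) Filter.tendsto_id)
    exact (h1.and h2).exists
  set f : X → X := fun x => u (hchoose x).choose with hfdef
  have hf1 : ∀ x, dist x (f x) < 2 * φ x := fun x => (hchoose x).choose_spec.1
  have hf2 : ∀ x, φ (f x) < φ x / 2 := fun x => (hchoose x).choose_spec.2
  obtain ⟨x, hx⟩ := h f ⟨fun x => 4 * φ x,
    (continuous_const.mul hcont).lowerSemicontinuous,
    ⟨0, fun y hy => by obtain ⟨z, rfl⟩ := hy; show (0:ℝ) ≤ 4 * φ z; have := hφ0 z; linarith⟩,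
    fun x => by show dist x (f x) ≤ 4 * φ x - 4 * φ (f x); have := hf1 x; have := hf2 x; linarith⟩
  have := hf2 x
  rw [hx] at this
  linarith [hpos x]
end

section
/- Let (X,ρ) be a complete metric space and f : X → ℝ ∪ {+∞} a proper, lower semicontinuous, bounded from below function. If for every x ∈ X with inf f(X) < f(x) there exists y_x ∈ X \ {x} such that f(y_x) + ρ(x, y_x) ≤ f(x), then there exists x₀ ∈ X such that f(x₀) = inf f(X). -/
/-!
Ekeland's argument. The sets `S x = {y | f y + d(x, y) ≤ f x}` are closed by lower
semicontinuity, and `y ∈ S x` implies `S y ⊆ S x`. Choosing `x_{n+1} ∈ S x_n` that minimises `f`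
on `S x_n` up to `1/(n+1)` traps `S x_{n+1}` in the closed ball of radius `1/(n+1)` about
`x_{n+1}`; hence `(x_n)` is Cauchy, its limit `x₀` lies in every `S x_n`, and every point of
`S x₀` is also a limit of `(x_n)`, so `S x₀ = {x₀}`. If `f x₀` exceeded `inf f`, the hypothesis
would put a point other than `x₀` into `S x₀`.
-/

open Filter Topology

section Ekeland

variable {X : Type*} [MetricSpace X] {f : X → EReal}

def descentSet (f : X → EReal) (x : X) : Set X :=
  {y | f y + (dist x y : EReal) ≤ f x}

theorem self_mem_descentSet (x : X) : x ∈ descentSet f x := by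
  simp [descentSet]

theorem le_of_mem_descentSet {x y : X} (hy : y ∈ descentSet f x) : f y ≤ f x :=
  le_trans (le_add_of_nonneg_right (EReal.coe_nonneg.2 dist_nonneg)) hy

theorem descentSet_subset {x y : X} (hy : y ∈ descentSet f x) :
    descentSet f y ⊆ descentSet f x := by
  intro z hz
  calc f z + (dist x z : EReal)
      ≤ f z + (dist y z : EReal) + (dist x y : EReal) := by
        rw [add_assoc, ← EReal.coe_add]
        gcongr
        linarith [dist_triangle x y z]
    _ ≤ f y + (dist x y : EReal) := by gcongr; exact hz
    _ ≤ f x := hy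

theorem isClosed_descentSet (hf : LowerSemicontinuous f) (x : X) :
    IsClosed (descentSet f x) := by
  have hsum : LowerSemicontinuous fun y => f y + (dist x y : EReal) :=
    hf.add' (continuous_coe_real_ereal.comp
      (continuous_const.dist continuous_id)).lowerSemicontinuous fun y =>
        EReal.continuousAt_add (.inr (EReal.coe_ne_bot _)) (.inr (EReal.coe_ne_top _))
  exact hsum.isClosed_preimage (f x)

theorem exists_mem_descentSet_le_iInf_add (hbdd : ∃ c : ℝ, ∀ x, (c : EReal) ≤ f x) (x : X)
    {ε : ℝ} (hε : 0 < ε) :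
    ∃ y ∈ descentSet f x, f y ≤ (⨅ z ∈ descentSet f x, f z) + ε := by
  set m := ⨅ z ∈ descentSet f x, f z
  obtain ⟨c, hc⟩ := hbdd
  have hm_bot : m ≠ ⊥ := ne_bot_of_le_ne_bot (EReal.coe_ne_bot c) (le_iInf₂ fun z _ => hc z)
  by_cases hm_top : m = ⊤
  · exact ⟨x, self_mem_descentSet x, by simp [hm_top]⟩
  have hlt : m < m + ε := by
    rw [← EReal.coe_toReal hm_top hm_bot, ← EReal.coe_add]
    exact_mod_cast lt_add_of_pos_right _ hε
  obtain ⟨y, hy, hfy⟩ := by simpa only [m, iInf_lt_iff, exists_prop] using hlt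
  exact ⟨y, hy, hfy.le⟩

theorem dist_le_of_le_iInf_add {x y z : X} {ε : ℝ} (hy : y ∈ descentSet f x)
    (hfy : f y ≤ (⨅ z ∈ descentSet f x, f z) + ε) (hz : z ∈ descentSet f y)
    (hfy_top : f y ≠ ⊤) (hfz_bot : f z ≠ ⊥) : dist y z ≤ ε := by
  have hfz_top : f z ≠ ⊤ := ne_top_of_le_ne_top hfy_top (le_of_mem_descentSet hz)
  have key : f z + (dist y z : EReal) ≤ f z + ε :=
    calc f z + (dist y z : EReal) ≤ f y := hz
      _ ≤ (⨅ z ∈ descentSet f x, f z) + ε := hfy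
      _ ≤ f z + ε := by gcongr; exact biInf_le f (descentSet_subset hy hz)
  rw [← EReal.coe_toReal hfz_top hfz_bot, ← EReal.coe_add, ← EReal.coe_add] at key
  exact_mod_cast (add_le_add_iff_left _).1 (EReal.coe_le_coe_iff.1 key)

theorem exists_seq_descentSet (hbdd : ∃ c : ℝ, ∀ x, (c : EReal) ≤ f x) (x : X) :
    ∃ a : ℕ → X, a 0 = x ∧ (∀ n, a (n + 1) ∈ descentSet f (a n)) ∧
      ∀ n, f (a (n + 1)) ≤ (⨅ z ∈ descentSet f (a n), f z) + (1 / (n + 1) : ℝ) := by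
  choose g hg using fun (n : ℕ) (y : X) =>
    exists_mem_descentSet_le_iInf_add hbdd y (Nat.one_div_pos_of_nat (n := n))
  exact ⟨fun n => Nat.rec x g n, rfl, fun n => (hg n _).1, fun n => (hg n _).2⟩

theorem exists_descentSet_eq_singleton [CompleteSpace X] (hf : LowerSemicontinuous f)
    (hbdd : ∃ c : ℝ, ∀ x, (c : EReal) ≤ f x) {x : X} (hx : f x ≠ ⊤) :
    ∃ x₀, descentSet f x₀ = {x₀} := by
  obtain ⟨a, ha0, ha_mem, ha_le⟩ := exists_seq_descentSet hbdd x
  have ha_anti : ∀ n m, n ≤ m → descentSet f (a m) ⊆ descentSet f (a n) := by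
    intro n m hnm
    induction m, hnm using Nat.le_induction with
    | base => exact subset_rfl
    | succ m _ ih => exact (descentSet_subset (ha_mem m)).trans ih
  have hrad : ∀ n, ∀ z ∈ descentSet f (a (n + 1)), dist (a (n + 1)) z ≤ 1 / (n + 1) := by
    intro n z hz
    obtain ⟨c, hc⟩ := hbdd
    have hfa : f (a (n + 1)) ≤ f x :=
      ha0 ▸ le_of_mem_descentSet (ha_anti 0 (n + 1) n.succ.zero_le (self_mem_descentSet _))
    exact dist_le_of_le_iInf_add (ha_mem n) (ha_le n) hz (ne_top_of_le_ne_top hx hfa)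
      (ne_bot_of_le_ne_bot (EReal.coe_ne_bot c) (hc z))
  have hlim : ∀ z, (∀ n, z ∈ descentSet f (a n)) → Tendsto a atTop (𝓝 z) := by
    intro z hz
    refine (tendsto_add_atTop_iff_nat 1).1 (tendsto_iff_dist_tendsto_zero.2 ?_)
    exact squeeze_zero (fun _ => dist_nonneg) (fun n => hrad n z (hz _))
      tendsto_one_div_add_atTop_nhds_zero_nat
  have hcauchy : CauchySeq a := by
    refine Metric.cauchySeq_iff'.2 fun ε hε => ?_
    obtain ⟨k, hk⟩ := exists_nat_one_div_lt hε
    refine ⟨k + 1, fun n hn => ?_⟩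
    rw [dist_comm]
    exact (hrad k _ (ha_anti _ _ hn (self_mem_descentSet _))).trans_lt hk
  obtain ⟨x₀, hx₀⟩ := cauchySeq_tendsto_of_complete hcauchy
  have hx₀_mem : ∀ n, x₀ ∈ descentSet f (a n) := fun n =>
    (isClosed_descentSet hf _).mem_of_tendsto hx₀
      ((eventually_ge_atTop n).mono fun m hm => ha_anti n m hm (self_mem_descentSet _))
  refine ⟨x₀, Set.Subset.antisymm (fun y hy => ?_) ?_⟩
  · exact tendsto_nhds_unique (hlim y fun n => descentSet_subset (hx₀_mem n) hy) hx₀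
  · exact Set.singleton_subset_iff.2 (self_mem_descentSet x₀)

end Ekeland

/-- Takahashi's principle: let `(X,ρ)` be a complete metric space and `f : X → ℝ ∪ {+∞}`
a proper, lower semicontinuous, bounded below function. If for every `x` with
`inf f(X) < f(x)` there is `y_x ≠ x` with `f(y_x) + ρ(x,y_x) ≤ f(x)`, then `f` attains
its infimum at some `x₀ ∈ X`. -/
theorem takahashi_principle {X : Type*} [MetricSpace X] [CompleteSpace X]
    (f : X → EReal)
    (hproper : ∃ x, f x ≠ ⊤)
    (hlsc : LowerSemicontinuous f)
    (hbdd : ∃ c : ℝ, ∀ x, (c : EReal) ≤ f x)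
    (h : ∀ x : X, (⨅ z, f z) < f x →
      ∃ y : X, y ≠ x ∧ f y + ((dist x y : ℝ) : EReal) ≤ f x) :
    ∃ x₀ : X, f x₀ = ⨅ z, f z := by
  obtain ⟨x, hx⟩ := hproper
  obtain ⟨x₀, hx₀⟩ := exists_descentSet_eq_singleton hlsc hbdd hx
  refine ⟨x₀, le_antisymm (not_lt.1 fun hlt => ?_) (iInf_le f x₀)⟩
  obtain ⟨y, hne, hy⟩ := h x₀ hlt
  exact hne (hx₀.subset hy)
end

section
/- Let (X,ρ) be a complete metric space and F : X → Set(X) a set-valued mapping satisfying: (i) F(x) is closed for every x ∈ X; (ii) x ∈ F(x) for every x ∈ X; (iii) x₂ ∈ F(x₁) implies F(x₂) ⊆ F(x₁) for all x₁, x₂ ∈ X; (iv) lim_{n→∞} ρ(x_n, x_{n+1}) = 0 for every sequence (x_n) in X with x_{n+1} ∈ F(x_n) for all n. Then there exists x₀ ∈ X with F(x₀) = {x₀}; moreover, for every x̄ ∈ X such a point x₀ can be found in F(x̄). -/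
/-!
Walk greedily: from `x` step to a point of `F x` at least half as far from `x` as the farthest
point of `F x` (capped at `1`). By (iv) the steps shrink, so the reach of `F` along the walk tends
to `0`; by (ii) and (iii) the sets `F (u n)` are nested and contain the tail of the walk, which is
therefore Cauchy. Its limit lies in every `F (u n)` by (i), hence so does `F` of the limit, whose
points are then arbitrarily close to the limit.
-/

open Filter Topology ENNReal

theorem ENNReal.exists_mem_min_one_le_two_mul {α : Type*} {s : Set α} (hs : s.Nonempty)
    (f : α → ℝ≥0∞) : ∃ a ∈ s, min (⨆ b ∈ s, f b) 1 ≤ 2 * f a := by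
  obtain ⟨a₀, ha₀⟩ := hs
  by_cases h0 : min (⨆ b ∈ s, f b) 1 = 0
  · exact ⟨a₀, ha₀, h0 ▸ zero_le⟩
  have htop : min (⨆ b ∈ s, f b) 1 ≠ ∞ := ne_top_of_le_ne_top one_ne_top (min_le_right _ _)
  have hhalf : min (⨆ b ∈ s, f b) 1 / 2 < ⨆ b ∈ s, f b :=
    (ENNReal.half_lt_self h0 htop).trans_le (min_le_left _ _)
  obtain ⟨a, ha, hlt⟩ := lt_biSup_iff.mp hhalf
  refine ⟨a, ha, ?_⟩
  rw [mul_comm, ← ENNReal.div_le_iff_le_mul (.inl two_ne_zero) (.inl ofNat_ne_top)]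
  exact hlt.le

theorem ENNReal.tendsto_nhds_zero_of_min_one {α : Type*} {l : Filter α} {f : α → ℝ≥0∞}
    (h : Tendsto (fun i => min (f i) 1) l (𝓝 0)) : Tendsto f l (𝓝 0) := by
  refine h.congr' ((h.eventually (gt_mem_nhds zero_lt_one)).mono fun i hi => ?_)
  exact min_eq_left (min_lt_iff.mp hi |>.resolve_right (lt_irrefl 1)).le

namespace SetValued

variable {X : Type*}

def IsPicardSeq (F : X → Set X) (u : ℕ → X) : Prop :=
  ∀ n, u (n + 1) ∈ F (u n)

theorem IsPicardSeq.antitone {F : X → Set X} (h3 : ∀ x₁ x₂ : X, x₂ ∈ F x₁ → F x₂ ⊆ F x₁)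
    {u : ℕ → X} (hu : IsPicardSeq F u) : Antitone (F ∘ u) :=
  antitone_nat_of_succ_le fun n => h3 _ _ (hu n)

theorem IsPicardSeq.mem_of_le {F : X → Set X} (h2 : ∀ x, x ∈ F x)
    (h3 : ∀ x₁ x₂ : X, x₂ ∈ F x₁ → F x₂ ⊆ F x₁) {u : ℕ → X} (hu : IsPicardSeq F u) {n m : ℕ}
    (hnm : n ≤ m) : u m ∈ F (u n) :=
  hu.antitone h3 hnm (h2 (u m))

section PseudoEMetric

variable [PseudoEMetricSpace X]

noncomputable def reach (F : X → Set X) (x : X) : ℝ≥0∞ :=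
  ⨆ y ∈ F x, edist x y

theorem edist_le_reach {F : X → Set X} {x y : X} (hy : y ∈ F x) : edist x y ≤ reach F x :=
  le_iSup₂ (f := fun y (_ : y ∈ F x) => edist x y) y hy

theorem edist_le_two_mul_reach {F : X → Set X} {x y z : X} (hy : y ∈ F x) (hz : z ∈ F x) :
    edist y z ≤ 2 * reach F x :=
  calc edist y z ≤ edist x y + edist x z := edist_triangle_left _ _ _
    _ ≤ reach F x + reach F x := add_le_add (edist_le_reach hy) (edist_le_reach hz)
    _ = 2 * reach F x := (two_mul _).symm

theorem exists_picardSeq_tendsto_reach_zero {F : X → Set X} (h2 : ∀ x, x ∈ F x)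
    (h4 : ∀ u, IsPicardSeq F u → Tendsto (fun n => edist (u n) (u (n + 1))) atTop (𝓝 0))
    (x : X) : ∃ u, u 0 = x ∧ IsPicardSeq F u ∧ Tendsto (reach F ∘ u) atTop (𝓝 0) := by
  choose g hgF hg using fun x => ENNReal.exists_mem_min_one_le_two_mul ⟨x, h2 x⟩
    (fun y => edist x y)
  set u : ℕ → X := fun n => g^[n] x
  have hstep : ∀ n, u (n + 1) = g (u n) := fun n => Function.iterate_succ_apply' g n x
  have hu : IsPicardSeq F u := fun n => hstep n ▸ hgF (u n)
  refine ⟨u, rfl, hu, ENNReal.tendsto_nhds_zero_of_min_one ?_⟩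
  have hsteps : Tendsto (fun n => 2 * edist (u n) (u (n + 1))) atTop (𝓝 0) := by
    simpa using ENNReal.Tendsto.const_mul (h4 u hu) (.inr ofNat_ne_top)
  refine tendsto_of_tendsto_of_tendsto_of_le_of_le tendsto_const_nhds hsteps
    (fun _ => zero_le) fun n => ?_
  exact (hstep n).symm ▸ hg (u n)

theorem IsPicardSeq.cauchySeq {F : X → Set X} (h2 : ∀ x, x ∈ F x)
    (h3 : ∀ x₁ x₂ : X, x₂ ∈ F x₁ → F x₂ ⊆ F x₁) {u : ℕ → X} (hu : IsPicardSeq F u)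
    (hr : Tendsto (reach F ∘ u) atTop (𝓝 0)) : CauchySeq u := by
  refine EMetric.cauchySeq_iff_le_tendsto_0.mpr ⟨fun N => 2 * reach F (u N), ?_, ?_⟩
  · exact fun n m N hn hm =>
      edist_le_two_mul_reach (hu.mem_of_le h2 h3 hn) (hu.mem_of_le h2 h3 hm)
  · simpa using ENNReal.Tendsto.const_mul hr (.inr ofNat_ne_top)

end PseudoEMetric

theorem IsPicardSeq.exists_stationary_mem [EMetricSpace X] [CompleteSpace X] {F : X → Set X}
    (h1 : ∀ x, IsClosed (F x)) (h2 : ∀ x, x ∈ F x) (h3 : ∀ x₁ x₂ : X, x₂ ∈ F x₁ → F x₂ ⊆ F x₁)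
    {u : ℕ → X} (hu : IsPicardSeq F u) (hr : Tendsto (reach F ∘ u) atTop (𝓝 0)) :
    ∃ x₀ ∈ F (u 0), F x₀ = {x₀} := by
  obtain ⟨x₀, hx₀⟩ := cauchySeq_tendsto_of_complete (hu.cauchySeq h2 h3 hr)
  have hmem : ∀ n, x₀ ∈ F (u n) := fun n =>
    (h1 (u n)).mem_of_tendsto hx₀ (eventually_atTop.mpr ⟨n, fun _ => hu.mem_of_le h2 h3⟩)
  refine ⟨x₀, hmem 0, Set.eq_singleton_iff_unique_mem.mpr ⟨h2 x₀, fun y hy => ?_⟩⟩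
  have hbound : ∀ n, edist y x₀ ≤ 2 * reach F (u n) := fun n =>
    edist_le_two_mul_reach (h3 _ _ (hmem n) hy) (hmem n)
  have hlim : Tendsto (fun n => 2 * reach F (u n)) atTop (𝓝 0) := by
    simpa using ENNReal.Tendsto.const_mul hr (.inr ofNat_ne_top)
  exact edist_le_zero.mp (ge_of_tendsto' hlim hbound)

end SetValued

open SetValued in
/-- Dancs–Hegedűs–Medvegyev: let `(X,ρ)` be a complete metric space and `F : X → Set X`
satisfy: (i) each `F x` is closed; (ii) `x ∈ F x`; (iii) `x₂ ∈ F x₁ → F x₂ ⊆ F x₁`;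
(iv) `ρ(x_n, x_{n+1}) → 0` for every generalized Picard sequence. Then `F` has a
stationary point `x₀` (i.e. `F x₀ = {x₀}`), and for every `x̄` such a point can be found
in `F x̄`. -/
theorem dancs_hegedus_medvegyev {X : Type*} [MetricSpace X] [CompleteSpace X] [Nonempty X]
    (F : X → Set X)
    (h1 : ∀ x, IsClosed (F x))
    (h2 : ∀ x, x ∈ F x)
    (h3 : ∀ x₁ x₂ : X, x₂ ∈ F x₁ → F x₂ ⊆ F x₁)
    (h4 : ∀ u : ℕ → X, (∀ n, u (n + 1) ∈ F (u n)) →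
      Filter.Tendsto (fun n => dist (u n) (u (n + 1))) Filter.atTop (nhds 0)) :
    (∃ x₀ : X, F x₀ = {x₀}) ∧ ∀ xbar : X, ∃ x₀ ∈ F xbar, F x₀ = {x₀} := by
  have h4' : ∀ u, IsPicardSeq F u → Tendsto (fun n => edist (u n) (u (n + 1))) atTop (𝓝 0) :=
    fun u hu => by simpa [edist_dist] using ENNReal.tendsto_ofReal (h4 u hu)
  have hstat : ∀ xbar, ∃ x₀ ∈ F xbar, F x₀ = {x₀} := fun xbar => by
    obtain ⟨u, rfl, hu, hr⟩ := exists_picardSeq_tendsto_reach_zero h2 h4' xbar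
    exact hu.exists_stationary_mem h1 h2 h3 hr
  obtain ⟨x⟩ := ‹Nonempty X›
  obtain ⟨x₀, -, hx₀⟩ := hstat x
  exact ⟨⟨x₀, hx₀⟩, hstat⟩
end

section
/- For a metric space (X,d) the following are equivalent: (1) (X,d) is complete; (2) there exists r ∈ (0,1) such that every mapping f : X → X satisfying, for all x, y ∈ X, the implication (1/10000)·d(x, f(x)) ≤ d(x,y) ⟹ d(f(x), f(y)) ≤ r·d(x,y), has a fixed point. -/
open Filter Topology

/-- Suzuki: a metric space `(X,d)` is complete if and only if there exists `r ∈ (0,1)`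
such that every mapping `f : X → X` satisfying
`(1/10000)·d(x,f(x)) ≤ d(x,y) ⟹ d(f(x),f(y)) ≤ r·d(x,y)` for all `x,y`, has a fixed
point. -/
theorem suzuki_complete_iff {X : Type*} [MetricSpace X] [Nonempty X] :
    CompleteSpace X ↔
      ∃ r : ℝ, 0 < r ∧ r < 1 ∧
        ∀ f : X → X,
          (∀ x y : X, (1 / 10000 : ℝ) * dist x (f x) ≤ dist x y →
            dist (f x) (f y) ≤ r * dist x y) →
          ∃ x : X, f x = x := by
  constructor
  · intro hC
    refine ⟨1/2, by norm_num, by norm_num, fun f hf => ?_⟩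
    obtain ⟨x0⟩ := ‹Nonempty X›
    set u : ℕ → X := fun n => f^[n] x0 with hu
    have hsucc : ∀ n, u (n+1) = f (u n) := fun n => Function.iterate_succ_apply' f n x0
    have hbasic : ∀ x : X, dist (f x) (f (f x)) ≤ (1/2) * dist x (f x) := by
      intro x
      apply hf
      nlinarith [dist_nonneg (x := x) (y := f x)]
    have hgeo : ∀ n, dist (u n) (u (n+1)) ≤ dist (u 0) (u 1) * (1/2)^n := by
      intro n
      induction n with
      | zero => simp
      | succ n ih =>
        have h1 : dist (u (n+1)) (u (n+2)) ≤ (1/2) * dist (u n) (u (n+1)) := by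
          rw [hsucc (n+1), hsucc n]
          exact hbasic (u n)
        calc dist (u (n+1)) (u (n+2)) ≤ (1/2) * dist (u n) (u (n+1)) := h1
          _ ≤ (1/2) * (dist (u 0) (u 1) * (1/2)^n) := by linarith
          _ = dist (u 0) (u 1) * (1/2)^(n+1) := by ring
    have hcauchy : CauchySeq u :=
      cauchySeq_of_le_geometric (1/2) (dist (u 0) (u 1)) (by norm_num) hgeo
    obtain ⟨z, hz⟩ := cauchySeq_tendsto_of_complete hcauchy
    by_cases hcase : ∀ N, ∃ n ≥ N, (1/10000 : ℝ) * dist (u n) (f (u n)) ≤ dist (u n) z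
    · refine ⟨z, ?_⟩
      rw [← dist_eq_zero (x := f z) (y := z)]
      have key : ∀ ε : ℝ, 0 < ε → dist (f z) z ≤ 0 + ε := by
        intro ε hε
        obtain ⟨N, hN⟩ := (Metric.tendsto_atTop).1 hz (ε/3) (by linarith)
        obtain ⟨n, hn, hth⟩ := hcase N
        have h1 : dist (f (u n)) (f z) ≤ (1/2) * dist (u n) z := hf (u n) z hth
        have h2 : dist (u (n+1)) z < ε/3 := hN (n+1) (by omega)
        have h3 : dist (u n) z < ε/3 := hN n hn
        have h4 : dist (f z) z ≤ dist (f z) (f (u n)) + dist (f (u n)) z := dist_triangle _ _ _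
        rw [dist_comm (f z) (f (u n))] at h4
        have h5 : dist (f (u n)) z = dist (u (n+1)) z := by rw [hsucc n]
        linarith
      have hle := le_of_forall_pos_le_add key
      linarith [dist_nonneg (x := f z) (y := z)]
    · exfalso
      push_neg at hcase
      obtain ⟨N, hN⟩ := hcase
      have e1 := hN N le_rfl
      have e2 := hN (N+1) (by omega)
      have e3 : dist (u (N+1)) (f (u (N+1))) ≤ (1/2) * dist (u N) (f (u N)) := by
        rw [hsucc N]
        exact hbasic (u N)
      have e4 : dist (u N) (f (u N)) ≤ dist (u N) z + dist z (u (N+1)) := by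
        rw [hsucc N]
        exact dist_triangle _ _ _
      rw [dist_comm z (u (N+1))] at e4
      linarith [dist_nonneg (x := u N) (y := f (u N))]
  · rintro ⟨r, hr0, hr1, hfp⟩
    apply Metric.complete_of_cauchySeq_tendsto
    intro u hu
    by_contra hno
    push_neg at hno
    -- the limit function of distances
    have hex : ∀ x : X, ∃ L : ℝ, Tendsto (fun n => dist x (u n)) atTop (𝓝 L) := by
      intro x
      apply cauchySeq_tendsto_of_complete
      rw [Metric.cauchySeq_iff]
      intro ε hε
      obtain ⟨N, hN⟩ := Metric.cauchySeq_iff.1 hu ε hε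
      refine ⟨N, fun m hm n hn => ?_⟩
      have h1 : |dist x (u m) - dist x (u n)| ≤ dist (u m) (u n) := by
        rw [dist_comm x (u m), dist_comm x (u n)]
        exact abs_dist_sub_le (u m) (u n) x
      calc dist (dist x (u m)) (dist x (u n)) = |dist x (u m) - dist x (u n)| := Real.dist_eq _ _
        _ ≤ dist (u m) (u n) := h1
        _ < ε := hN m hm n hn
    choose h hh using hex
    have hnn : ∀ x, 0 ≤ h x := fun x =>
      ge_of_tendsto' (hh x) (fun n => dist_nonneg)
    have hpos : ∀ x, 0 < h x := by
      intro x
      rcases (hnn x).lt_or_eq with hlt | heq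
      · exact hlt
      · exfalso
        apply hno x
        rw [tendsto_iff_dist_tendsto_zero]
        have : (fun n => dist (u n) x) = fun n => dist x (u n) := by
          funext n; exact dist_comm _ _
        rw [this]
        have h0 : Tendsto (fun n => dist x (u n)) atTop (𝓝 0) := by
          rw [heq]; exact hh x
        exact h0
    have htri : ∀ x y : X, h x ≤ h y + dist x y := by
      intro x y
      refine le_of_tendsto_of_tendsto' (hh x) ((hh y).add_const (dist x y)) (fun n => ?_)
      calc dist x (u n) ≤ dist x y + dist y (u n) := dist_triangle _ _ _
        _ = dist y (u n) + dist x y := by ring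
    have hsum : ∀ x y : X, dist x y ≤ h x + h y := by
      intro x y
      refine ge_of_tendsto' ((hh x).add (hh y)) (fun n => ?_)
      calc dist x y ≤ dist x (u n) + dist (u n) y := dist_triangle _ _ _
        _ = dist x (u n) + dist y (u n) := by rw [dist_comm (u n) y]
    have hsmall : ∀ ε : ℝ, 0 < ε → ∃ N, ∀ n ≥ N, h (u n) ≤ ε := by
      intro ε hε
      obtain ⟨N, hN⟩ := Metric.cauchySeq_iff.1 hu ε hε
      refine ⟨N, fun n hn => ?_⟩
      apply le_of_tendsto (hh (u n))
      filter_upwards [eventually_ge_atTop N] with m hm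
      exact (hN n hn m hm).le
    set δ : ℝ := r / 50000 with hδdef
    have hδ0 : 0 < δ := by positivity
    have hδ1 : δ < 1/50000 := by
      rw [hδdef]; linarith
    -- construct the map
    have hchoice : ∀ x : X, ∃ y : X, dist x y ≤ (1+δ) * h x ∧ h y ≤ δ * h x := by
      intro x
      have hx := hpos x
      have ev1 : ∀ᶠ n in atTop, dist x (u n) < (1+δ) * h x := by
        apply (hh x).eventually_lt_const
        nlinarith
      have ev2 : ∀ᶠ n in atTop, h (u n) ≤ δ * h x := by
        obtain ⟨N, hN⟩ := hsmall (δ * h x) (by positivity)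
        filter_upwards [eventually_ge_atTop N] with n hn
        exact hN n hn
      obtain ⟨n, h1, h2⟩ := (ev1.and ev2).exists
      exact ⟨u n, h1.le, h2⟩
    choose f hf1 hf2 using hchoice
    have hcond : ∀ x y : X, (1 / 10000 : ℝ) * dist x (f x) ≤ dist x y →
        dist (f x) (f y) ≤ r * dist x y := by
      intro x y hxy
      have ha := hnn x
      have hb := hnn y
      have hd := dist_nonneg (x := x) (y := y)
      have h1 : h x ≤ h (f x) + dist x (f x) := htri x (f x)
      have h2 : h (f x) ≤ δ * h x := hf2 x
      have h3 : h (f y) ≤ δ * h y := hf2 y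
      have h4 : h y ≤ h x + dist x y := by
        have := htri y x
        rwa [dist_comm y x] at this
      have h5 : dist x (f x) ≤ 10000 * dist x y := by linarith
      have h6 : dist (f x) (f y) ≤ h (f x) + h (f y) := hsum (f x) (f y)
      -- bound h x in terms of dist x y
      have h7 : h x - δ * h x ≤ 10000 * dist x y := by linarith
      have h8 : δ * h x ≤ (1/50000) * h x := by nlinarith
      have h9 : h x ≤ 10001 * dist x y := by nlinarith
      -- conclude
      have h10 : dist (f x) (f y) ≤ δ * (2 * h x + dist x y) := by
        nlinarith [mul_le_mul_of_nonneg_left h4 hδ0.le]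
      have h11 : δ * (2 * h x + dist x y) ≤ r * dist x y := by
        rw [hδdef]
        rw [div_mul_eq_mul_div, div_le_iff₀ (by norm_num : (0:ℝ) < 50000)]
        nlinarith
      linarith
    obtain ⟨x, hx⟩ := hfp f hcond
    have hgt := hpos x
    have hle : h x ≤ δ * h x := by
      have := hf2 x
      rwa [hx] at this
    nlinarith
end

section
/- Let (X,ρ) be an ultrametric space. Then X is spherically complete if and only if every contractive mapping f : X → X has a (unique) fixed point. -/
/-- A metric space is spherically complete if every collection of closed balls that
pairwise intersect has nonempty intersection. -/
def SphericallyComplete (X : Type*) [MetricSpace X] : Prop :=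
  ∀ B : Set (X × ℝ),
    (∀ b ∈ B, ∀ b' ∈ B,
      (Metric.closedBall b.1 b.2 ∩ Metric.closedBall b'.1 b'.2).Nonempty) →
    (⋂ b ∈ B, Metric.closedBall b.1 b.2).Nonempty

/-- Auxiliary: in an ultrametric space, if `x` is outside a closed ball and `y` inside,
then `dist x y` exceeds the radius. -/
lemma ultra_aux {X : Type*} [MetricSpace X]
    (hultra : ∀ x y z : X, dist x z ≤ max (dist x y) (dist y z))
    {x y c : X} {r : ℝ} (hx : r < dist x c) (hy : dist y c ≤ r) : r < dist x y := by
  have h := hultra x y c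
  rcases le_max_iff.mp h with h1 | h1
  · linarith
  · linarith

/-- Priess-Crampe: an ultrametric space `(X,ρ)` is spherically complete if and only if
every contractive mapping on `X` has a (unique) fixed point. -/
theorem priessCrampe_sphericallyComplete_iff {X : Type*} [MetricSpace X] [Nonempty X]
    (hultra : ∀ x y z : X, dist x z ≤ max (dist x y) (dist y z)) :
    SphericallyComplete X ↔
      ∀ f : X → X, (∀ x y : X, x ≠ y → dist (f x) (f y) < dist x y) →
        ∃! x : X, f x = x := by
  classical
  constructor
  · -- spherically complete → fixed point
    intro hsc f hf
    have hkey : ∀ a b : X, b ∈ Metric.closedBall a (dist a (f a)) →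
        Metric.closedBall b (dist b (f b)) ⊆ Metric.closedBall a (dist a (f a)) := by
      intro a b hb
      rcases eq_or_ne a b with rfl | hab
      · exact subset_rfl
      · intro w hw
        rw [Metric.mem_closedBall] at hb hw ⊢
        have hfafb : dist (f a) (f b) < dist a b := hf a b hab
        have hab' : dist a b ≤ dist a (f a) := by rw [dist_comm]; exact hb
        have hafb : dist a (f b) ≤ dist a (f a) :=
          (hultra a (f a) (f b)).trans (max_le le_rfl (le_of_lt (hfafb.trans_le hab')))
        have hba : dist b a ≤ dist a (f a) := hb
        have h1 : dist b (f b) ≤ dist a (f a) :=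
          (hultra b a (f b)).trans (max_le hba hafb)
        exact (hultra w b a).trans (max_le (hw.trans h1) hba)
    set S : Set (Set X) := {s | ∃ a : X, s = Metric.closedBall a (dist a (f a))} with hS
    have hbound : ∀ c ⊆ S, IsChain (· ⊆ ·) c → ∃ lb ∈ S, ∀ s ∈ c, lb ⊆ s := by
      intro c hcS hchain
      rcases c.eq_empty_or_nonempty with rfl | hcne
      · refine ⟨Metric.closedBall (Classical.arbitrary X)
          (dist (Classical.arbitrary X) (f (Classical.arbitrary X))), ⟨_, rfl⟩, by simp⟩
      · set B' : Set (X × ℝ) :=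
          {p | p.2 = dist p.1 (f p.1) ∧ Metric.closedBall p.1 p.2 ∈ c} with hB'
        have hpair : ∀ b ∈ B', ∀ b' ∈ B',
            (Metric.closedBall b.1 b.2 ∩ Metric.closedBall b'.1 b'.2).Nonempty := by
          rintro ⟨a, r⟩ ⟨hr, hc1⟩ ⟨a', r'⟩ ⟨hr', hc2⟩
          simp only at hr hr' hc1 hc2 ⊢
          subst hr; subst hr'
          rcases eq_or_ne (Metric.closedBall a (dist a (f a)))
              (Metric.closedBall a' (dist a' (f a'))) with heq | hne
          · exact ⟨a, Metric.mem_closedBall_self dist_nonneg,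
              heq ▸ Metric.mem_closedBall_self dist_nonneg⟩
          · rcases hchain hc1 hc2 hne with h | h
            · exact ⟨a, Metric.mem_closedBall_self dist_nonneg,
                h (Metric.mem_closedBall_self dist_nonneg)⟩
            · exact ⟨a', h (Metric.mem_closedBall_self dist_nonneg),
                Metric.mem_closedBall_self dist_nonneg⟩
        obtain ⟨p, hp⟩ := hsc B' hpair
        rw [Set.mem_iInter₂] at hp
        refine ⟨Metric.closedBall p (dist p (f p)), ⟨p, rfl⟩, ?_⟩
        intro s hs
        obtain ⟨a, rfl⟩ := hcS hs
        exact hkey a p (hp (a, dist a (f a)) ⟨rfl, hs⟩)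

    obtain ⟨m, hm⟩ := zorn_superset S hbound
    obtain ⟨a, rfl⟩ := hm.prop
    have hfix : f a = a := by
      by_contra hne
      have h1 : f a ∈ Metric.closedBall a (dist a (f a)) := by
        rw [Metric.mem_closedBall, dist_comm]
      have hsub := hkey a (f a) h1
      have h2 := hm.2 ⟨f a, rfl⟩ hsub
      have ha : a ∈ Metric.closedBall (f a) (dist (f a) (f (f a))) :=
        h2 (Metric.mem_closedBall_self dist_nonneg)
      rw [Metric.mem_closedBall] at ha
      have h3 : dist (f a) (f (f a)) < dist a (f a) := hf a (f a) (fun h => hne h.symm)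
      linarith
    refine ⟨a, hfix, fun y hy => ?_⟩
    by_contra hya
    have := hf y a hya
    rw [hy, hfix] at this
    exact lt_irrefl _ this
  · -- fixed point property → spherically complete
    intro hfp B hB
    by_contra hempty
    rw [Set.not_nonempty_iff_eq_empty] at hempty
    -- every point misses some ball
    have hex : ∀ x : X, ∃ b ∈ B, x ∉ Metric.closedBall b.1 b.2 := by
      intro x
      by_contra h
      push_neg at h
      have hx : x ∈ ⋂ b ∈ B, Metric.closedBall b.1 b.2 := Set.mem_iInter₂.2 h
      rw [hempty] at hx
      exact hx
    -- radii are nonnegative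
    have hr : ∀ b ∈ B, (0:ℝ) ≤ b.2 := by
      intro b hb
      obtain ⟨z, hz, -⟩ := hB b hb b hb
      exact dist_nonneg.trans hz
    -- the balls form a chain
    have hchain : ∀ b ∈ B, ∀ b' ∈ B,
        Metric.closedBall b.1 b.2 ⊆ Metric.closedBall b'.1 b'.2 ∨
        Metric.closedBall b'.1 b'.2 ⊆ Metric.closedBall b.1 b.2 := by
      have key : ∀ b ∈ B, ∀ b' ∈ B, b.2 ≤ b'.2 →
          Metric.closedBall b.1 b.2 ⊆ Metric.closedBall b'.1 b'.2 := by
        intro b hb b' hb' hle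
        obtain ⟨z, hz1, hz2⟩ := hB b hb b' hb'
        rw [Metric.mem_closedBall] at hz1 hz2
        intro w hw
        rw [Metric.mem_closedBall] at hw ⊢
        have hcc : dist b.1 b'.1 ≤ b'.2 := by
          have := hultra b.1 z b'.1
          rw [dist_comm b.1 z] at this
          exact this.trans (max_le (hz1.trans hle) hz2)
        exact (hultra w b.1 b'.1).trans (max_le (hw.trans hle) hcc)
      intro b hb b' hb'
      rcases le_total b.2 b'.2 with h | h
      · exact Or.inl (key b hb b' hb' h)
      · exact Or.inr (key b' hb' b hb h)
    -- the set of balls missing x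
    set Cx : X → Set (X × ℝ) := fun x => {b | b ∈ B ∧ x ∉ Metric.closedBall b.1 b.2}
      with hCx
    have hCne : ∀ x, (Cx x).Nonempty := by
      intro x
      obtain ⟨b, hb, hxb⟩ := hex x
      exact ⟨b, hb, hxb⟩
    set pick : Set (X × ℝ) → X × ℝ :=
      fun S => if h : S.Nonempty then h.choose else (Classical.arbitrary X, 0) with hpick
    have hpickmem : ∀ x : X, pick (Cx x) ∈ Cx x := by
      intro x
      rw [hpick]
      simp only [dif_pos (hCne x)]
      exact (hCne x).choose_spec
    set f : X → X := fun x => (pick (Cx x)).1 with hfdef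
    -- f x lies in its chosen ball
    have hfmem : ∀ x : X, f x ∈ Metric.closedBall (pick (Cx x)).1 (pick (Cx x)).2 := by
      intro x
      rw [Metric.mem_closedBall, hfdef]
      simp only [dist_self]
      exact hr _ (hpickmem x).1
    -- the core contraction estimate
    have main : ∀ x y : X, (∃ b ∈ B, x ∉ Metric.closedBall b.1 b.2 ∧
        y ∈ Metric.closedBall b.1 b.2) → dist (f x) (f y) < dist x y := by
      rintro x y ⟨b, hb, hxb, hyb⟩
      set bx := pick (Cx x) with hbx
      set by' := pick (Cx y) with hby
      have hbxB : bx ∈ B := (hpickmem x).1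
      have hbyB : by' ∈ B := (hpickmem y).1
      have hxbx : x ∉ Metric.closedBall bx.1 bx.2 := (hpickmem x).2
      have hyby : y ∉ Metric.closedBall by'.1 by'.2 := (hpickmem y).2
      -- B_{by'} ⊆ B_b
      have hby_sub : Metric.closedBall by'.1 by'.2 ⊆ Metric.closedBall b.1 b.2 := by
        rcases hchain by' hbyB b hb with h | h
        · exact h
        · exact absurd (h hyb) hyby
      have hfyb : f y ∈ Metric.closedBall b.1 b.2 := hby_sub (hfmem y)
      -- choose the dominating ball b*
      obtain ⟨bs, hbsB, hxs, hys, hfxs, hfys⟩ :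
          ∃ bs ∈ B, x ∉ Metric.closedBall bs.1 bs.2 ∧ y ∈ Metric.closedBall bs.1 bs.2 ∧
            f x ∈ Metric.closedBall bs.1 bs.2 ∧ f y ∈ Metric.closedBall bs.1 bs.2 := by
        rcases hchain bx hbxB b hb with h | h
        · exact ⟨b, hb, hxb, hyb, h (hfmem x), hfyb⟩
        · exact ⟨bx, hbxB, hxbx, h hyb, hfmem x, h hfyb⟩
      rw [Metric.mem_closedBall] at hxs hys hfxs hfys
      push_neg at hxs
      have h1 : dist (f x) (f y) ≤ bs.2 := by
        have := hultra (f x) bs.1 (f y)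
        rw [dist_comm bs.1 (f y)] at this
        exact this.trans (max_le hfxs hfys)
      exact lt_of_le_of_lt h1 (ultra_aux hultra hxs hys)
    -- f is contractive
    have hcontr : ∀ x y : X, x ≠ y → dist (f x) (f y) < dist x y := by
      intro x y hxy
      rcases eq_or_ne (Cx x) (Cx y) with heq | hne
      · have : f x = f y := by rw [hfdef]; simp only [heq]
        rw [this, dist_self]
        exact dist_pos.mpr hxy
      · -- some ball is in exactly one of the two families
        have : ∃ b, (b ∈ Cx x ∧ b ∉ Cx y) ∨ (b ∈ Cx y ∧ b ∉ Cx x) := by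
          by_contra h
          push_neg at h
          exact hne (Set.ext fun b => ⟨(h b).1, (h b).2⟩)
        obtain ⟨b, hcase⟩ := this
        rcases hcase with ⟨⟨hbB, hxb⟩, hnot⟩ | ⟨⟨hbB, hyb⟩, hnot⟩
        · have hyin : y ∈ Metric.closedBall b.1 b.2 := by
            by_contra h
            exact hnot ⟨hbB, h⟩
          exact main x y ⟨b, hbB, hxb, hyin⟩
        · have hxin : x ∈ Metric.closedBall b.1 b.2 := by
            by_contra h
            exact hnot ⟨hbB, h⟩
          have := main y x ⟨b, hbB, hyb, hxin⟩
          rwa [dist_comm (f y) (f x), dist_comm y x] at this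
    -- but f has no fixed point
    obtain ⟨z, hz, -⟩ := hfp f hcontr
    have hzmem := hfmem z
    have hznot := (hpickmem z).2
    rw [hz] at hzmem
    exact hznot hzmem
end

section
/- Let X be a nonempty set, f : X → X, and α ∈ (0,1). (1) If for every n ∈ ℕ the iterate f^n has at most one fixed point, then there exists a metric ρ on X such that ρ(f(x), f(y)) ≤ α·ρ(x,y) for all x, y ∈ X. (2) If, in addition, some iterate f^n has a fixed point, then there exists a complete metric ρ on X such that ρ(f(x), f(y)) ≤ α·ρ(x,y) for all x, y ∈ X. -/
open Function Classical

namespace BessagaAux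

variable {X : Type*} (f : X → X)

/-- eventually-fixed points -/
def E (x : X) : Prop := ∃ k, f (f^[k] x) = f^[k] x

lemma E_of_iter {x : X} {m n : ℕ} {y : X} (h : f^[m] x = f^[n] y) (hy : E f y) : E f x := by
  obtain ⟨k, hk⟩ := hy
  refine ⟨m + k, ?_⟩
  have h1 : f^[m + k] x = f^[n] (f^[k] y) := by
    rw [add_comm, Function.iterate_add_apply, h, ← Function.iterate_add_apply,
      add_comm, Function.iterate_add_apply]
  rw [h1, Function.iterate_fixed hk, hk]

lemma E_of_f {x : X} (h : E f (f x)) : E f x := by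
  obtain ⟨k, hk⟩ := h
  exact ⟨k + 1, by rwa [Function.iterate_succ_apply]⟩

lemma E_f {x : X} (h : E f x) : E f (f x) := by
  obtain ⟨k, hk⟩ := h
  refine ⟨k, ?_⟩
  have h1 : f^[k] (f x) = f^[k] x := by
    rw [← Function.iterate_succ_apply, Function.iterate_succ_apply', hk]
  rw [h1, hk]

variable (hper : ∀ (x : X) (n : ℕ), 0 < n → f^[n] x = x → f x = x)

include hper in
lemma iter_inj {x : X} (hx : ¬ E f x) : ∀ m n : ℕ, f^[m] x = f^[n] x → m = n := by
  intro m n h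
  by_contra hne
  wlog hlt : m < n generalizing m n
  · exact this n m h.symm (Ne.symm hne) (by omega)
  have hp : f^[n - m] (f^[m] x) = f^[m] x := by
    rw [← Function.iterate_add_apply, Nat.sub_add_cancel hlt.le, ← h]
  have := hper (f^[m] x) (n - m) (by omega) hp
  exact hx ⟨m, this⟩

/-- the orbit-equivalence setoid -/
def S : Setoid X := ⟨fun x y => ∃ m n, f^[m] x = f^[n] y, by
  constructor
  · exact fun x => ⟨0, 0, rfl⟩
  · rintro x y ⟨m, n, h⟩; exact ⟨n, m, h.symm⟩
  · rintro x y z ⟨m, n, h1⟩ ⟨p, q, h2⟩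
    refine ⟨p + m, n + q, ?_⟩
    rw [Function.iterate_add_apply, h1, ← Function.iterate_add_apply, add_comm p n,
      Function.iterate_add_apply, h2, ← Function.iterate_add_apply]⟩

noncomputable def rep (x : X) : X := Quotient.out (Quotient.mk (S f) x)

lemma rep_rel (x : X) : ∃ m n, f^[m] x = f^[n] (rep f x) := by
  have : Quotient.mk (S f) (rep f x) = Quotient.mk (S f) x := Quotient.out_eq _
  exact Setoid.symm' (S f) (Quotient.exact this)

lemma rep_f (x : X) : rep f (f x) = rep f x := by
  unfold rep
  congr 1
  exact Quotient.sound ⟨0, 1, rfl⟩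

noncomputable def gm (x : X) : ℕ := (rep_rel f x).choose
noncomputable def gn (x : X) : ℕ := (rep_rel f x).choose_spec.choose

lemma g_spec (x : X) : f^[gm f x] x = f^[gn f x] (rep f x) :=
  (rep_rel f x).choose_spec.choose_spec

noncomputable def gee (x : X) : ℤ := (gn f x : ℤ) - (gm f x : ℤ)

include hper in
lemma g_eq {x b : X} (hx : ¬ E f x) {m n m' n' : ℕ}
    (h1 : f^[m] x = f^[n] b) (h2 : f^[m'] x = f^[n'] b) :
    (n : ℤ) - m = (n' : ℤ) - m' := by
  have hb : ¬ E f b := fun h => hx (E_of_iter f h1 h)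
  have e1 : f^[m' + n] b = f^[m + n'] b := by
    rw [Function.iterate_add_apply, ← h1, ← Function.iterate_add_apply, add_comm m' m,
      Function.iterate_add_apply, h2, ← Function.iterate_add_apply, add_comm]
  have := iter_inj f hper hb _ _ e1
  omega

include hper in
lemma gee_f {x : X} (hx : ¬ E f x) : gee f (f x) = gee f x + 1 := by
  have hfx : ¬ E f (f x) := fun h => hx (E_of_f f h)
  have h1 : f^[gm f (f x)] (f x) = f^[gn f (f x)] (rep f x) := by
    rw [← rep_f f x]; exact g_spec f (f x)
  have h2 : f^[gm f x] (f x) = f^[gn f x + 1] (rep f x) := by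
    rw [← Function.iterate_succ_apply, Function.iterate_succ_apply', g_spec f x,
      Function.iterate_succ_apply']
  have := g_eq f hper hfx h1 h2
  unfold gee
  omega

variable (α : ℝ)

noncomputable def phi (x : X) : ℝ :=
  if h : E f x then (if Nat.find h = 0 then 0 else α ^ (-(Nat.find h : ℤ)))
  else α ^ (gee f x)

variable (hα0 : 0 < α) (hα1 : α < 1)

include hα0 in
lemma phi_nonneg (x : X) : 0 ≤ phi f α x := by
  unfold phi
  split_ifs <;> positivity

include hα0 in
lemma phi_eq_zero_iff (x : X) : phi f α x = 0 ↔ f x = x := by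
  unfold phi
  constructor
  · intro h
    split_ifs at h with h1 h2
    · have := Nat.find_spec h1
      rw [h2] at this
      simpa using this
    · exact absurd h (by positivity)
    · exact absurd h (by positivity)
  · intro h
    have hE : E f x := ⟨0, by simpa using h⟩
    rw [dif_pos hE, if_pos (Nat.find_eq_zero hE |>.2 (by simpa using h))]

include hper hα0 in
lemma phi_f (x : X) : phi f α (f x) ≤ α * phi f α x := by
  by_cases hE : E f x
  · have hEf : E f (f x) := E_f f hE
    rcases Nat.eq_zero_or_pos (Nat.find hE) with h0 | hpos
    · -- x is fixed
      have hfx : f x = x := by simpa using Nat.find_eq_zero hE |>.1 h0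
      have h1 : phi f α (f x) = 0 := by rw [hfx]; exact (phi_eq_zero_iff f α hα0 x).2 hfx
      have h2 : phi f α x = 0 := (phi_eq_zero_iff f α hα0 x).2 hfx
      rw [h1, h2]
      simp
    · obtain ⟨j, hj⟩ : ∃ j, Nat.find hE = j + 1 := ⟨Nat.find hE - 1, by omega⟩
      have hle : Nat.find hEf ≤ j := by
        apply Nat.find_le
        have := Nat.find_spec hE
        rw [hj] at this
        rwa [← Function.iterate_succ_apply]
      have hge : j ≤ Nat.find hEf := by
        by_contra hlt
        push_neg at hlt
        have := Nat.find_spec hEf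
        rw [← Function.iterate_succ_apply] at this
        have h2 : Nat.find hE ≤ Nat.find hEf + 1 := Nat.find_le this
        omega
      have hfeq : Nat.find hEf = j := le_antisymm hle hge
      have key : α * α ^ (-((j : ℤ) + 1)) = α ^ (-(j : ℤ)) := by
        rw [show (-(j : ℤ)) = 1 + (-((j : ℤ) + 1)) by ring, zpow_add₀ (ne_of_gt hα0), zpow_one]
      have hcast : (-(↑(j + 1) : ℤ)) = -((j : ℤ) + 1) := by push_cast; ring
      unfold phi
      rw [dif_pos hE, dif_pos hEf, hfeq, hj]
      rw [if_neg (Nat.succ_ne_zero j), hcast]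
      rcases Nat.eq_zero_or_pos j with hj0 | hjpos
      · rw [if_pos hj0]
        positivity
      · rw [if_neg (Nat.pos_iff_ne_zero.mp hjpos), key]
  · have hEf : ¬ E f (f x) := fun h => hE (E_of_f f h)
    unfold phi
    rw [dif_neg hE, dif_neg hEf, gee_f f hper hE, zpow_add_one₀ (ne_of_gt hα0)]
    rw [mul_comm]

end BessagaAux

/-- Bessaga: let `X` be a nonempty set, `f : X → X`, `α ∈ (0,1)`.
(1) If every iterate `f^[n]` (`n ≥ 1`) has at most one fixed point, then there is a
metric on `X` making `f` an `α`-contraction.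
(2) If, in addition, some iterate has a fixed point, then there is a complete such
metric. -/
theorem bessaga_converse {X : Type*} [Nonempty X] (f : X → X) (α : ℝ)
    (hα0 : 0 < α) (hα1 : α < 1)
    (hfix : ∀ n : ℕ, 0 < n → ∀ x y : X, f^[n] x = x → f^[n] y = y → x = y) :
    (∃ m : MetricSpace X, ∀ x y : X,
        @dist X m.toPseudoMetricSpace.toDist (f x) (f y)
          ≤ α * @dist X m.toPseudoMetricSpace.toDist x y) ∧
    ((∃ n : ℕ, 0 < n ∧ ∃ x : X, f^[n] x = x) →
      ∃ m : MetricSpace X,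
        (∀ x y : X,
          @dist X m.toPseudoMetricSpace.toDist (f x) (f y)
            ≤ α * @dist X m.toPseudoMetricSpace.toDist x y) ∧
        @CompleteSpace X m.toPseudoMetricSpace.toUniformSpace) := by
  classical
  -- all periodic points are fixed points
  have hper : ∀ (x : X) (n : ℕ), 0 < n → f^[n] x = x → f x = x := by
    intro x n hn hx
    have h2 : f^[n] (f x) = f x := by
      rw [← Function.iterate_succ_apply, Function.iterate_succ_apply', hx]
    exact hfix n hn (f x) x h2 hx
  set φ := BessagaAux.phi f α with hφdef
  have hφ0 : ∀ x, 0 ≤ φ x := BessagaAux.phi_nonneg f α hα0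
  have hφf : ∀ x, φ (f x) ≤ α * φ x := BessagaAux.phi_f f hper α hα0
  have hφz : ∀ x, φ x = 0 ↔ f x = x := BessagaAux.phi_eq_zero_iff f α hα0
  set ρ : X → X → ℝ := fun x y => if x = y then 0 else φ x + φ y with hρdef
  have hρ_self : ∀ x, ρ x x = 0 := fun x => if_pos rfl
  have hρ_comm : ∀ x y, ρ x y = ρ y x := by
    intro x y
    by_cases h : x = y
    · subst h; rfl
    · simp only [hρdef, if_neg h, if_neg (Ne.symm h)]; ring
  have hρ_nonneg : ∀ x y, 0 ≤ ρ x y := by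
    intro x y
    by_cases h : x = y
    · rw [h, hρ_self]
    · simp only [hρdef, if_neg h]
      exact add_nonneg (hφ0 _) (hφ0 _)
  have hρ_tri : ∀ x y z, ρ x z ≤ ρ x y + ρ y z := by
    intro x y z
    by_cases hxz : x = z
    · rw [hxz, hρ_self]
      exact add_nonneg (hρ_nonneg _ _) (hρ_nonneg _ _)
    · by_cases hxy : x = y
      · subst hxy
        rw [hρ_self, zero_add]
      · by_cases hyz : y = z
        · subst hyz
          rw [hρ_self, add_zero]
        · simp only [hρdef, if_neg hxz, if_neg hxy, if_neg hyz]
          have := hφ0 y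
          linarith
  have hρ_eq : ∀ x y, ρ x y = 0 → x = y := by
    intro x y h
    by_contra hne
    simp only [hρdef, if_neg hne] at h
    have h1 : φ x = 0 := le_antisymm (by linarith [hφ0 y]) (hφ0 x)
    have h2 : φ y = 0 := le_antisymm (by linarith [hφ0 x]) (hφ0 y)
    have e1 : f x = x := (hφz x).1 h1
    have e2 : f y = y := (hφz y).1 h2
    exact hne (hfix 1 one_pos x y (by simpa using e1) (by simpa using e2))
  have hcontr : ∀ x y, ρ (f x) (f y) ≤ α * ρ x y := by
    intro x y
    by_cases hfe : f x = f y
    · rw [hfe, hρ_self]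
      exact mul_nonneg hα0.le (hρ_nonneg _ _)
    · have hne : x ≠ y := fun h => hfe (by rw [h])
      simp only [hρdef, if_neg hfe, if_neg hne]
      calc φ (f x) + φ (f y) ≤ α * φ x + α * φ y := add_le_add (hφf x) (hφf y)
        _ = α * (φ x + φ y) := by ring
  set m : MetricSpace X :=
    { dist := ρ
      dist_self := hρ_self
      dist_comm := hρ_comm
      dist_triangle := hρ_tri
      eq_of_dist_eq_zero := fun {x y} h => hρ_eq x y h } with hmdef
  have hdist : ∀ x y : X, @dist X m.toPseudoMetricSpace.toDist x y = ρ x y := fun _ _ => rfl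
  constructor
  · exact ⟨m, fun x y => by rw [hdist, hdist]; exact hcontr x y⟩
  · rintro ⟨n, hn, x, hx⟩
    have hx0 : f x = x := hper x n hn hx
    refine ⟨m, fun a b => by rw [hdist, hdist]; exact hcontr a b, ?_⟩
    have hφx0 : φ x = 0 := (hφz x).2 hx0
    apply @Metric.complete_of_cauchySeq_tendsto X m.toPseudoMetricSpace
    intro u hu
    by_cases hconst : ∃ N, ∀ j ≥ N, u j = u N
    · obtain ⟨N, hN⟩ := hconst
      refine ⟨u N, ?_⟩
      apply Filter.Tendsto.congr' (f₁ := fun _ => u N)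
      · filter_upwards [Filter.eventually_ge_atTop N] with j hj
        exact (hN j hj).symm
      · exact tendsto_const_nhds
    · push_neg at hconst
      refine ⟨x, ?_⟩
      rw [Metric.tendsto_atTop]
      intro ε hε
      rw [Metric.cauchySeq_iff] at hu
      obtain ⟨N, hN⟩ := hu ε hε
      refine ⟨N, fun k hk => ?_⟩
      obtain ⟨j, hj, hne⟩ := hconst k
      have hd : dist (u j) (u k) < ε := hN j (le_trans hk hj) k hk
      rw [hdist] at hd
      simp only [hρdef] at hd
      rw [if_neg hne] at hd
      have hφk : φ (u k) < ε := by
        have := hφ0 (u j)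
        linarith
      rw [hdist]
      by_cases hku : u k = x
      · rw [hku, hρ_self]; exact hε
      · simp only [hρdef, if_neg hku]
        rw [hφx0]
        linarith
end

section
/- Let (X,ρ) be a compact metric space and f : X → X a continuous mapping such that ⋂_{n=1}^∞ f^n(X) = {ξ} for some ξ ∈ X. Then for every α ∈ (0,1) there exists a metric ρ_α on X, topologically equivalent to ρ (i.e., generating the same topology as ρ), such that ρ_α(f(x), f(y)) ≤ α·ρ_α(x,y) for all x, y ∈ X (and ξ is the unique fixed point of f). -/
open Metric Set Function

set_option linter.unusedSectionVars false

namespace JanosAux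

variable {X : Type*} [MetricSpace X] [CompactSpace X]
variable (f : X → X) (ξ : X) (α : ℝ)

/-- iterated images -/
def A (n : ℕ) : Set X := Set.range f^[n]

lemma A_succ_subset (n : ℕ) : A f (n + 1) ⊆ A f n := by
  rintro x ⟨w, rfl⟩
  exact ⟨f w, by rw [Function.iterate_succ_apply]⟩

lemma A_antitone : Antitone (A f) :=
  antitone_nat_of_succ_le (A_succ_subset f)

lemma isCompact_A (hf : Continuous f) (n : ℕ) : IsCompact (A f n) :=
  isCompact_range (hf.iterate n)

lemma iterate_mem_A (x : X) (n : ℕ) : f^[n] x ∈ A f n := ⟨x, rfl⟩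

variable {f ξ}

lemma xi_mem_A (hsq : (⋂ n : ℕ, Set.range (f^[n + 1])) = {ξ}) (n : ℕ) :
    ξ ∈ A f n := by
  have h : ξ ∈ ⋂ n : ℕ, Set.range (f^[n + 1]) := by rw [hsq]; exact rfl
  cases n with
  | zero => exact ⟨ξ, rfl⟩
  | succ m => exact Set.mem_iInter.mp h m

lemma fixed_point (hsq : (⋂ n : ℕ, Set.range (f^[n + 1])) = {ξ}) : f ξ = ξ := by
  have h : f ξ ∈ ⋂ n : ℕ, Set.range (f^[n + 1]) := by
    refine Set.mem_iInter.mpr fun n => ?_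
    obtain ⟨w, hw⟩ := xi_mem_A hsq (n + 1)
    exact ⟨f w, by rw [← Function.iterate_succ_apply, Function.iterate_succ_apply', hw]⟩
  rw [hsq] at h
  exact h

lemma fixed_point_unique (hsq : (⋂ n : ℕ, Set.range (f^[n + 1])) = {ξ}) (x : X)
    (hx : f x = x) : x = ξ := by
  have h : x ∈ ⋂ n : ℕ, Set.range (f^[n + 1]) := by
    refine Set.mem_iInter.mpr fun n => ⟨x, ?_⟩
    exact Function.iterate_fixed hx (n + 1)
  rw [hsq] at h
  exact h

/-- shrinking to ξ -/
lemma exists_A_subset_ball (hf : Continuous f)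
    (hsq : (⋂ n : ℕ, Set.range (f^[n + 1])) = {ξ}) {ε : ℝ} (hε : 0 < ε) :
    ∃ N : ℕ, A f N ⊆ Metric.ball ξ ε := by
  by_contra hcon
  push_neg at hcon
  set K : ℕ → Set X := fun n => A f (n + 1) ∩ (Metric.ball ξ ε)ᶜ with hK
  have hKc : ∀ n, IsClosed (K n) := fun n =>
    ((isCompact_A f hf (n + 1)).isClosed).inter isOpen_ball.isClosed_compl
  have hKcomp : IsCompact (K 0) :=
    (isCompact_A f hf 1).inter_right isOpen_ball.isClosed_compl
  have hKmono : ∀ n, K (n + 1) ⊆ K n := fun n =>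
    Set.inter_subset_inter_left _ (A_succ_subset f (n + 1))
  have hKne : ∀ n, (K n).Nonempty := by
    intro n
    obtain ⟨x, hx⟩ := Set.not_subset.mp (hcon (n + 1))
    exact ⟨x, hx.1, hx.2⟩
  obtain ⟨x, hx⟩ := IsCompact.nonempty_iInter_of_sequence_nonempty_isCompact_isClosed
    K hKmono hKne hKcomp hKc
  have hx1 : x ∈ ⋂ n : ℕ, Set.range (f^[n + 1]) := by
    refine Set.mem_iInter.mpr fun n => ?_
    exact (Set.mem_iInter.mp hx n).1
  rw [hsq] at hx1
  have hx2 := (Set.mem_iInter.mp hx 0).2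
  rw [hx1] at hx2
  exact hx2 (Metric.mem_ball_self hε)

variable (f)

/-- diameters of the iterated images -/
noncomputable def Dd (n : ℕ) : ℝ := Metric.diam (A f n)

variable {f}

lemma Dd_nonneg (n : ℕ) : 0 ≤ Dd f n := Metric.diam_nonneg

lemma Dd_antitone (hf : Continuous f) : Antitone (Dd f) := fun m n h =>
  Metric.diam_mono (A_antitone f h) (isCompact_A f hf m).isBounded

lemma dist_le_Dd (hf : Continuous f) {n : ℕ} {x y : X}
    (hx : x ∈ A f n) (hy : y ∈ A f n) : dist x y ≤ Dd f n :=
  Metric.dist_le_diam_of_mem (isCompact_A f hf n).isBounded hx hy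

lemma Dd_small (hf : Continuous f)
    (hsq : (⋂ n : ℕ, Set.range (f^[n + 1])) = {ξ}) {ε : ℝ} (hε : 0 < ε) :
    ∃ N : ℕ, Dd f N < ε := by
  obtain ⟨N, hN⟩ := exists_A_subset_ball hf hsq (by linarith : (0:ℝ) < ε / 3)
  refine ⟨N, ?_⟩
  have h1 : Dd f N ≤ Metric.diam (Metric.ball ξ (ε / 3)) :=
    Metric.diam_mono hN isBounded_ball
  have h2 : Metric.diam (Metric.ball ξ (ε / 3)) ≤ 2 * (ε / 3) :=
    Metric.diam_ball (by linarith)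
  linarith

variable (f)

/-- radii -/
noncomputable def rr (m : ℕ) : ℝ := Dd f ((m + 1) / 2) + (1/2 : ℝ) ^ m

variable {f}

lemma rr_pos (m : ℕ) : 0 < rr f m :=
  add_pos_of_nonneg_of_pos (Dd_nonneg _) (by positivity)

lemma rr_antitone (hf : Continuous f) : Antitone (rr f) := by
  refine antitone_nat_of_succ_le fun n => add_le_add ?_ ?_
  · exact Dd_antitone hf (by omega : (n + 1) / 2 ≤ (n + 2) / 2)
  · exact pow_le_pow_of_le_one (by norm_num) (by norm_num) (Nat.le_succ n)

lemma Dd_lt_rr (hf : Continuous f) (n : ℕ) : Dd f n < rr f n := by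
  have h1 : Dd f n ≤ Dd f ((n + 1) / 2) := Dd_antitone hf (by omega)
  have h2 : (0:ℝ) < (1/2 : ℝ) ^ n := by positivity
  unfold rr; linarith

lemma rr_small (hf : Continuous f)
    (hsq : (⋂ n : ℕ, Set.range (f^[n + 1])) = {ξ}) {ε : ℝ} (hε : 0 < ε) :
    ∃ M : ℕ, rr f M < ε := by
  obtain ⟨N, hN⟩ := Dd_small hf hsq (by linarith : (0:ℝ) < ε / 2)
  obtain ⟨K, hK⟩ := exists_pow_lt_of_lt_one (by linarith : (0:ℝ) < ε / 2)
    (by norm_num : (1/2 : ℝ) < 1)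
  refine ⟨2 * N + 2 * K, ?_⟩
  have h1 : Dd f ((2 * N + 2 * K + 1) / 2) ≤ Dd f N :=
    Dd_antitone hf (by omega)
  have h2 : ((1:ℝ)/2) ^ (2 * N + 2 * K) ≤ (1/2 : ℝ) ^ K :=
    pow_le_pow_of_le_one (by norm_num) (by norm_num) (by omega)
  unfold rr; linarith

variable (f ξ)

/-- the open sets V n -/
noncomputable def V (n : ℕ) : Set X :=
  ⋂ k ∈ Finset.range (n + 1), (f^[k]) ⁻¹' (Metric.ball ξ (rr f (n + k)))

lemma mem_V_iff {x : X} {n : ℕ} :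
    x ∈ V f ξ n ↔ ∀ k ≤ n, dist (f^[k] x) ξ < rr f (n + k) := by
  simp [V, Nat.lt_succ_iff, Metric.mem_ball]

lemma isOpen_V (hf : Continuous f) (n : ℕ) : IsOpen (V f ξ n) := by
  refine isOpen_biInter_finset fun k _ => ?_
  exact (isOpen_ball).preimage (hf.iterate k)

variable {f ξ}

lemma A_subset_V (hf : Continuous f)
    (hsq : (⋂ n : ℕ, Set.range (f^[n + 1])) = {ξ}) (n : ℕ) :
    A f n ⊆ V f ξ n := by
  rintro x ⟨w, rfl⟩
  refine (mem_V_iff f ξ).mpr fun k _ => ?_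
  have h1 : f^[k] (f^[n] w) ∈ A f (n + k) := by
    rw [← Function.iterate_add_apply]
    have : k + n = n + k := by omega
    rw [this]; exact iterate_mem_A f w (n + k)
  exact lt_of_le_of_lt (dist_le_Dd hf h1 (xi_mem_A hsq (n + k))) (Dd_lt_rr hf (n + k))

lemma xi_mem_V (hf : Continuous f)
    (hsq : (⋂ n : ℕ, Set.range (f^[n + 1])) = {ξ}) (n : ℕ) : ξ ∈ V f ξ n :=
  A_subset_V hf hsq n (xi_mem_A hsq n)

lemma V_succ_subset (hf : Continuous f) (n : ℕ) : V f ξ (n + 1) ⊆ V f ξ n := by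
  intro x hx
  refine (mem_V_iff f ξ).mpr fun k hk => ?_
  have h := (mem_V_iff f ξ).mp hx k (by omega)
  exact lt_of_lt_of_le h (rr_antitone hf (by omega))

lemma V_antitone (hf : Continuous f) : Antitone (V f ξ) :=
  antitone_nat_of_succ_le (V_succ_subset hf)

lemma f_mem_V (hf : Continuous f)
    (hsq : (⋂ n : ℕ, Set.range (f^[n + 1])) = {ξ}) {x : X} {n : ℕ}
    (hx : x ∈ V f ξ n) : f x ∈ V f ξ (n + 1) := by
  refine (mem_V_iff f ξ).mpr fun k hk => ?_
  rw [← Function.iterate_succ_apply]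
  rcases le_or_gt (k + 1) n with h | h
  · have := (mem_V_iff f ξ).mp hx (k + 1) h
    have heq : n + (k + 1) = n + 1 + k := by omega
    rwa [heq] at this
  · -- n ≤ k, use diameter bound
    have h1 : f^[k + 1] x ∈ A f (k + 1) := iterate_mem_A f x (k + 1)
    have h2 : dist (f^[k + 1] x) ξ ≤ Dd f (k + 1) :=
      dist_le_Dd hf h1 (xi_mem_A hsq (k + 1))
    have h3 : Dd f (k + 1) ≤ Dd f ((n + 1 + k + 1) / 2) :=
      Dd_antitone hf (by omega)
    have h4 : (0:ℝ) < (1/2 : ℝ) ^ (n + 1 + k) := by positivity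
    have : dist (f^[k+1] x) ξ < Dd f ((n + 1 + k + 1) / 2) + (1/2 : ℝ) ^ (n + 1 + k) := by
      linarith
    exact this

lemma V_zero_eq_univ (hf : Continuous f) : V f ξ 0 = Set.univ := by
  refine Set.eq_univ_of_forall fun x => (mem_V_iff f ξ).mpr fun k hk => ?_
  interval_cases k
  have h1 : dist (f^[0] x) ξ ≤ Dd f 0 := by
    simp only [Function.iterate_zero_apply]
    exact dist_le_Dd hf ⟨x, rfl⟩ ⟨ξ, rfl⟩
  exact lt_of_le_of_lt h1 (Dd_lt_rr hf 0)

/-! ### The sup-metric `Dm` -/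

variable (f)

/-- the sup metric -/
noncomputable def Dm (x y : X) : ℝ := ⨆ k : ℕ, dist (f^[k] x) (f^[k] y)

variable {f}

lemma Dm_bddAbove (x y : X) :
    BddAbove (Set.range fun k : ℕ => dist (f^[k] x) (f^[k] y)) := by
  refine ⟨Metric.diam (Set.univ : Set X), ?_⟩
  rintro _ ⟨k, rfl⟩
  exact Metric.dist_le_diam_of_mem isCompact_univ.isBounded (Set.mem_univ _)
    (Set.mem_univ _)

lemma dist_iterate_le_Dm (x y : X) (k : ℕ) :
    dist (f^[k] x) (f^[k] y) ≤ Dm f x y :=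
  le_ciSup (Dm_bddAbove x y) k

lemma dist_le_Dm (x y : X) : dist x y ≤ Dm f x y := by
  have := dist_iterate_le_Dm (f := f) x y 0
  simpa using this

lemma Dm_nonneg (x y : X) : 0 ≤ Dm f x y :=
  le_trans dist_nonneg (dist_le_Dm x y)

lemma Dm_le (x y : X) {c : ℝ} (h : ∀ k : ℕ, dist (f^[k] x) (f^[k] y) ≤ c) :
    Dm f x y ≤ c :=
  ciSup_le h

lemma Dm_comm (x y : X) : Dm f x y = Dm f y x := by
  unfold Dm; simp only [dist_comm]

lemma Dm_triangle (x y z : X) : Dm f x z ≤ Dm f x y + Dm f y z :=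
  Dm_le x z fun k => le_trans (dist_triangle _ (f^[k] y) _)
    (add_le_add (dist_iterate_le_Dm x y k) (dist_iterate_le_Dm y z k))

lemma Dm_self (x : X) : Dm f x x = 0 := by
  unfold Dm; simp

lemma Dm_f_le (x y : X) : Dm f (f x) (f y) ≤ Dm f x y :=
  Dm_le _ _ fun k => by
    rw [← Function.iterate_succ_apply, ← Function.iterate_succ_apply]
    exact dist_iterate_le_Dm x y (k + 1)

lemma Dm_le_rr_of_mem_V (hf : Continuous f)
    (hsq : (⋂ n : ℕ, Set.range (f^[n + 1])) = {ξ}) {x : X} {n : ℕ}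
    (hx : x ∈ V f ξ n) : Dm f x ξ ≤ rr f n := by
  have hfix : f ξ = ξ := fixed_point hsq
  refine Dm_le _ _ fun k => ?_
  rw [Function.iterate_fixed hfix k]
  rcases le_or_gt k n with h | h
  · exact le_trans ((mem_V_iff f ξ).mp hx k h).le (rr_antitone hf (by omega))
  · have h1 : f^[k] x ∈ A f n := A_antitone f h.le (iterate_mem_A f x k)
    exact le_trans (dist_le_Dd hf h1 (xi_mem_A hsq n)) (Dd_lt_rr hf n).le

lemma not_mem_V_of_rr_lt_Dm (hf : Continuous f)
    (hsq : (⋂ n : ℕ, Set.range (f^[n + 1])) = {ξ}) {x : X} {n : ℕ}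
    (h : rr f n < Dm f x ξ) : x ∉ V f ξ n :=
  fun hx => absurd (Dm_le_rr_of_mem_V hf hsq hx) (not_le.mpr h)

/-- uniform equicontinuity of the iterates -/
lemma iterates_UC (hf : Continuous f) {ε : ℝ} (hε : 0 < ε) (N : ℕ) :
    ∃ δ > 0, ∀ x y : X, dist x y < δ → ∀ k < N, dist (f^[k] x) (f^[k] y) < ε := by
  induction N with
  | zero => exact ⟨1, one_pos, fun x y _ k hk => absurd hk (by omega)⟩
  | succ N ih =>
    obtain ⟨δ1, hδ1, h1⟩ := ih
    obtain ⟨δ2, hδ2, h2⟩ := Metric.uniformContinuous_iff.mp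
      (CompactSpace.uniformContinuous_of_continuous (hf.iterate N)) ε hε
    refine ⟨min δ1 δ2, lt_min hδ1 hδ2, fun x y hxy k hk => ?_⟩
    rcases Nat.lt_or_ge k N with h | h
    · exact h1 x y (lt_of_lt_of_le hxy (min_le_left _ _)) k h
    · have hkN : k = N := by omega
      subst hkN
      exact h2 (lt_of_lt_of_le hxy (min_le_right _ _))

lemma Dm_UC (hf : Continuous f)
    (hsq : (⋂ n : ℕ, Set.range (f^[n + 1])) = {ξ}) {ε : ℝ} (hε : 0 < ε) :
    ∃ δ > 0, ∀ x y : X, dist x y < δ → Dm f x y < ε := by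
  obtain ⟨N, hN⟩ := exists_A_subset_ball hf hsq (by linarith : (0:ℝ) < ε / 4)
  obtain ⟨δ, hδ, hfin⟩ := iterates_UC hf (by linarith : (0:ℝ) < ε / 2) N
  refine ⟨δ, hδ, fun x y hxy => ?_⟩
  have : Dm f x y ≤ ε / 2 := by
    refine Dm_le _ _ fun k => ?_
    rcases Nat.lt_or_ge k N with h | h
    · exact (hfin x y hxy k h).le
    · have hx : f^[k] x ∈ Metric.ball ξ (ε / 4) := hN (A_antitone f h (iterate_mem_A f x k))
      have hy : f^[k] y ∈ Metric.ball ξ (ε / 4) := hN (A_antitone f h (iterate_mem_A f y k))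
      have := dist_triangle (f^[k] x) ξ (f^[k] y)
      rw [Metric.mem_ball] at hx hy
      rw [dist_comm ξ (f^[k] y)] at this
      linarith
  linarith

/-! ### The level function `kap` -/

variable (f ξ)

open Classical in
/-- level function -/
noncomputable def kap (x : X) : ℝ :=
  if h : ∃ n, x ∉ V f ξ n then α ^ (Nat.find h) else 0

variable {f ξ α}

lemma kap_nonneg (hα0 : 0 < α) (x : X) : 0 ≤ kap f ξ α x := by
  unfold kap; split
  · positivity
  · exact le_rfl

lemma kap_le_one (hα0 : 0 < α) (hα1 : α < 1) (x : X) : kap f ξ α x ≤ 1 := by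
  unfold kap; split
  · exact pow_le_one₀ hα0.le hα1.le
  · exact zero_le_one

lemma kap_ge_of_not_mem_V (hα0 : 0 < α) (hα1 : α < 1) {x : X} {n : ℕ}
    (h : x ∉ V f ξ n) : α ^ n ≤ kap f ξ α x := by
  classical
  have hex : ∃ m, x ∉ V f ξ m := ⟨n, h⟩
  unfold kap
  rw [dif_pos hex]
  exact pow_le_pow_of_le_one hα0.le hα1.le (Nat.find_le h)

lemma kap_f_le (hf : Continuous f)
    (hsq : (⋂ n : ℕ, Set.range (f^[n + 1])) = {ξ})
    (hα0 : 0 < α) (hα1 : α < 1) (x : X) :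
    kap f ξ α (f x) ≤ α * kap f ξ α x := by
  classical
  by_cases h : ∃ n, f x ∉ V f ξ n
  · have hm : f x ∉ V f ξ (Nat.find h) := Nat.find_spec h
    have hm0 : Nat.find h ≠ 0 := by
      intro h0
      rw [h0, V_zero_eq_univ hf] at hm
      exact hm (Set.mem_univ _)
    have hx : x ∉ V f ξ (Nat.find h - 1) := by
      intro hx
      have := f_mem_V hf hsq hx
      rw [show Nat.find h - 1 + 1 = Nat.find h by omega] at this
      exact hm this
    have h1 : α ^ (Nat.find h - 1) ≤ kap f ξ α x := kap_ge_of_not_mem_V hα0 hα1 hx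
    have h2 : kap f ξ α (f x) = α ^ (Nat.find h) := by unfold kap; rw [dif_pos h]
    rw [h2, show Nat.find h = (Nat.find h - 1) + 1 by omega, pow_succ, mul_comm]
    exact mul_le_mul_of_nonneg_left h1 hα0.le
  · have h2 : kap f ξ α (f x) = 0 := by unfold kap; rw [dif_neg h]
    rw [h2]
    exact mul_nonneg hα0.le (kap_nonneg hα0 x)

/-! ### Step costs and chains -/

variable (f ξ α)

/-- elementary cost -/
noncomputable def cost (u v : X) : ℝ :=
  max (kap f ξ α u) (kap f ξ α v) * min 1 (Dm f u v)

/-- costs of chains from x to y -/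
def S (x y : X) : Set ℝ :=
  {c : ℝ | ∃ (m : ℕ) (z : ℕ → X), z 0 = x ∧ z m = y ∧
    c = ∑ i ∈ Finset.range m, cost f ξ α (z i) (z (i + 1))}

/-- the new metric -/
noncomputable def dJ (x y : X) : ℝ := sInf (S f ξ α x y)

variable {f ξ α}

lemma cost_nonneg (hα0 : 0 < α) (u v : X) : 0 ≤ cost f ξ α u v :=
  mul_nonneg (le_trans (kap_nonneg hα0 u) (le_max_left _ _))
    (le_min zero_le_one (Dm_nonneg u v))

lemma cost_comm (u v : X) : cost f ξ α u v = cost f ξ α v u := by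
  unfold cost; rw [max_comm, Dm_comm]

lemma cost_le_Dm (hα0 : 0 < α) (hα1 : α < 1) (u v : X) :
    cost f ξ α u v ≤ Dm f u v := by
  have h1 : max (kap f ξ α u) (kap f ξ α v) ≤ 1 :=
    max_le (kap_le_one hα0 hα1 u) (kap_le_one hα0 hα1 v)
  calc cost f ξ α u v ≤ 1 * min 1 (Dm f u v) :=
        mul_le_mul_of_nonneg_right h1 (le_min zero_le_one (Dm_nonneg u v))
    _ = min 1 (Dm f u v) := one_mul _
    _ ≤ Dm f u v := min_le_right _ _

lemma cost_f_le (hf : Continuous f)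
    (hsq : (⋂ n : ℕ, Set.range (f^[n + 1])) = {ξ})
    (hα0 : 0 < α) (hα1 : α < 1) (u v : X) :
    cost f ξ α (f u) (f v) ≤ α * cost f ξ α u v := by
  have h1 : max (kap f ξ α (f u)) (kap f ξ α (f v))
      ≤ α * max (kap f ξ α u) (kap f ξ α v) := by
    refine max_le ?_ ?_
    · exact le_trans (kap_f_le hf hsq hα0 hα1 u)
        (mul_le_mul_of_nonneg_left (le_max_left _ _) hα0.le)
    · exact le_trans (kap_f_le hf hsq hα0 hα1 v)
        (mul_le_mul_of_nonneg_left (le_max_right _ _) hα0.le)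
  have h2 : min 1 (Dm f (f u) (f v)) ≤ min 1 (Dm f u v) :=
    min_le_min le_rfl (Dm_f_le u v)
  have h3 : 0 ≤ min 1 (Dm f (f u) (f v)) := le_min zero_le_one (Dm_nonneg _ _)
  have h4 : 0 ≤ α * max (kap f ξ α u) (kap f ξ α v) :=
    mul_nonneg hα0.le (le_trans (kap_nonneg hα0 u) (le_max_left _ _))
  calc cost f ξ α (f u) (f v)
      ≤ (α * max (kap f ξ α u) (kap f ξ α v)) * min 1 (Dm f u v) :=
        mul_le_mul h1 h2 h3 h4
    _ = α * cost f ξ α u v := by unfold cost; ring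

lemma S_nonempty (x y : X) : (S f ξ α x y).Nonempty := by
  refine ⟨cost f ξ α x y, 1, fun i => if i = 0 then x else y, by simp, by simp, ?_⟩
  simp

lemma S_bddBelow (hα0 : 0 < α) (x y : X) : BddBelow (S f ξ α x y) := by
  refine ⟨0, ?_⟩
  rintro c ⟨m, z, _, _, rfl⟩
  exact Finset.sum_nonneg fun i _ => cost_nonneg hα0 _ _

lemma dJ_nonneg (hα0 : 0 < α) (x y : X) : 0 ≤ dJ f ξ α x y :=
  le_csInf (S_nonempty x y) (fun c hc => by
    obtain ⟨m, z, _, _, rfl⟩ := hc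
    exact Finset.sum_nonneg fun i _ => cost_nonneg hα0 _ _)

lemma dJ_le_cost (hα0 : 0 < α) (x y : X) : dJ f ξ α x y ≤ cost f ξ α x y := by
  refine csInf_le (S_bddBelow hα0 x y) ?_
  exact ⟨1, fun i => if i = 0 then x else y, by simp, by simp, by simp⟩

lemma dJ_le_Dm (hα0 : 0 < α) (hα1 : α < 1) (x y : X) :
    dJ f ξ α x y ≤ Dm f x y :=
  le_trans (dJ_le_cost hα0 x y) (cost_le_Dm hα0 hα1 x y)

lemma dJ_self (hα0 : 0 < α) (x : X) : dJ f ξ α x x = 0 := by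
  refine le_antisymm ?_ (dJ_nonneg hα0 x x)
  refine csInf_le (S_bddBelow hα0 x x) ?_
  exact ⟨0, fun _ => x, rfl, rfl, by simp⟩

lemma S_comm_subset (x y : X) : S f ξ α x y ⊆ S f ξ α y x := by
  rintro c ⟨m, z, hz0, hzm, rfl⟩
  refine ⟨m, fun i => z (m - i), by simp [hzm], by simp [hz0], ?_⟩
  calc ∑ i ∈ Finset.range m, cost f ξ α (z i) (z (i + 1))
      = ∑ i ∈ Finset.range m, cost f ξ α (z (m - 1 - i)) (z (m - 1 - i + 1)) :=
        (Finset.sum_range_reflect (fun i => cost f ξ α (z i) (z (i + 1))) m).symm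
    _ = ∑ i ∈ Finset.range m, cost f ξ α (z (m - i)) (z (m - (i + 1))) := by
        refine Finset.sum_congr rfl fun i hi => ?_
        have hi' : i < m := Finset.mem_range.mp hi
        rw [show m - 1 - i + 1 = m - i by omega, show m - 1 - i = m - (i + 1) by omega,
          cost_comm]

lemma dJ_comm (x y : X) : dJ f ξ α x y = dJ f ξ α y x := by
  unfold dJ
  rw [Set.Subset.antisymm (S_comm_subset x y) (S_comm_subset y x)]

lemma S_concat {x y z : X} {c1 c2 : ℝ} (h1 : c1 ∈ S f ξ α x y)
    (h2 : c2 ∈ S f ξ α y z) : c1 + c2 ∈ S f ξ α x z := by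
  obtain ⟨m1, w1, h10, h11, rfl⟩ := h1
  obtain ⟨m2, w2, h20, h21, rfl⟩ := h2
  refine ⟨m1 + m2, fun i => if i < m1 then w1 i else w2 (i - m1), ?_, ?_, ?_⟩
  · rcases Nat.eq_zero_or_pos m1 with h | h
    · subst h; simpa [h20] using (h11.symm.trans h10)
    · simp [h, h10]
  · have : ¬ (m1 + m2 < m1) := by omega
    simp [this, h21]
  · rw [Finset.sum_range_add]
    congr 1
    · refine Finset.sum_congr rfl fun i hi => ?_
      have hi' : i < m1 := Finset.mem_range.mp hi
      rcases Nat.lt_or_ge (i + 1) m1 with h | h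
      · simp [hi', h]
      · have hieq : i + 1 = m1 := by omega
        have : ¬ (i + 1 < m1) := by omega
        simp only [hi', if_true, this, if_false]
        rw [hieq, Nat.sub_self, h20, ← h11]
    · refine Finset.sum_congr rfl fun i hi => ?_
      have h1 : ¬ (m1 + i < m1) := by omega
      have h2 : ¬ (m1 + i + 1 < m1) := by omega
      simp only [h1, if_false, h2]
      rw [show m1 + i - m1 = i by omega, show m1 + i + 1 - m1 = i + 1 by omega]

lemma dJ_triangle (hα0 : 0 < α) (x y z : X) :
    dJ f ξ α x z ≤ dJ f ξ α x y + dJ f ξ α y z := by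
  have key : ∀ c1 ∈ S f ξ α x y, ∀ c2 ∈ S f ξ α y z, dJ f ξ α x z ≤ c1 + c2 :=
    fun c1 hc1 c2 hc2 => csInf_le (S_bddBelow hα0 x z) (S_concat hc1 hc2)
  have h2 : dJ f ξ α x z - dJ f ξ α x y ≤ dJ f ξ α y z := by
    refine le_csInf (S_nonempty y z) fun c2 hc2 => ?_
    have h3 : dJ f ξ α x z - c2 ≤ dJ f ξ α x y := by
      refine le_csInf (S_nonempty x y) fun c1 hc1 => ?_
      linarith [key c1 hc1 c2 hc2]
    linarith
  linarith

lemma dJ_contract (hf : Continuous f)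
    (hsq : (⋂ n : ℕ, Set.range (f^[n + 1])) = {ξ})
    (hα0 : 0 < α) (hα1 : α < 1) (x y : X) :
    dJ f ξ α (f x) (f y) ≤ α * dJ f ξ α x y := by
  have key : ∀ c ∈ S f ξ α x y, dJ f ξ α (f x) (f y) ≤ α * c := by
    rintro c ⟨m, z, hz0, hzm, rfl⟩
    have hmem : (∑ i ∈ Finset.range m, cost f ξ α (f (z i)) (f (z (i + 1))))
        ∈ S f ξ α (f x) (f y) :=
      ⟨m, fun i => f (z i), by simp [hz0], by simp [hzm], rfl⟩
    refine le_trans (csInf_le (S_bddBelow hα0 _ _) hmem) ?_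
    rw [Finset.mul_sum]
    exact Finset.sum_le_sum fun i _ => cost_f_le hf hsq hα0 hα1 _ _
  have h1 : dJ f ξ α (f x) (f y) / α ≤ dJ f ξ α x y := by
    refine le_csInf (S_nonempty x y) fun c hc => ?_
    rw [div_le_iff₀ hα0]
    exact le_trans (key c hc) (by rw [mul_comm])
  calc dJ f ξ α (f x) (f y) = (dJ f ξ α (f x) (f y) / α) * α := by
        field_simp
    _ ≤ dJ f ξ α x y * α := mul_le_mul_of_nonneg_right h1 hα0.le
    _ = α * dJ f ξ α x y := mul_comm _ _

/-! ### Lower bound for `dJ` -/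

variable (f ξ)

/-- truncated distance-to-ξ potential -/
noncomputable def psi (T : ℝ) (x : X) : ℝ := min 1 (max (Dm f x ξ - T) 0)

variable {f ξ}

lemma psi_nonneg (T : ℝ) (x : X) : 0 ≤ psi f ξ T x :=
  le_min zero_le_one (le_max_right _ _)

lemma psi_le_one (T : ℝ) (x : X) : psi f ξ T x ≤ 1 := min_le_left _ _

lemma psi_eq_zero_of_le {T : ℝ} {x : X} (h : Dm f x ξ ≤ T) : psi f ξ T x = 0 := by
  unfold psi
  rw [max_eq_right (by linarith), min_eq_right zero_le_one]

lemma psi_sub_le (T : ℝ) (u v : X) :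
    psi f ξ T u - psi f ξ T v ≤ min 1 (Dm f u v) := by
  have h1 : Dm f u ξ ≤ Dm f u v + Dm f v ξ := Dm_triangle u v ξ
  have h2 : 0 ≤ Dm f u v := Dm_nonneg u v
  unfold psi
  simp only [min_def, max_def]
  split_ifs <;> linarith

lemma cost_step (hf : Continuous f)
    (hsq : (⋂ n : ℕ, Set.range (f^[n + 1])) = {ξ})
    (hα0 : 0 < α) (hα1 : α < 1) (M : ℕ) (u v : X) :
    α ^ M * (psi f ξ (rr f M) u - psi f ξ (rr f M) v) ≤ cost f ξ α u v := by
  rcases le_or_gt (psi f ξ (rr f M) u) (psi f ξ (rr f M) v) with h | h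
  · exact le_trans (mul_nonpos_of_nonneg_of_nonpos (pow_nonneg hα0.le M)
      (by linarith)) (cost_nonneg hα0 u v)
  · have hupos : 0 < psi f ξ (rr f M) u := lt_of_le_of_lt (psi_nonneg _ v) h
    have hDu : rr f M < Dm f u ξ := by
      by_contra hle
      push_neg at hle
      rw [psi_eq_zero_of_le hle] at hupos
      exact absurd hupos (lt_irrefl 0)
    have hnot : u ∉ V f ξ M := not_mem_V_of_rr_lt_Dm hf hsq hDu
    have hk : α ^ M ≤ kap f ξ α u := kap_ge_of_not_mem_V hα0 hα1 hnot
    have hsub := psi_sub_le (f := f) (ξ := ξ) (rr f M) u v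
    have h0max : (0:ℝ) ≤ max (kap f ξ α u) (kap f ξ α v) :=
      le_trans (kap_nonneg hα0 u) (le_max_left _ _)
    exact mul_le_mul (le_trans hk (le_max_left _ _)) hsub (by linarith) h0max

lemma cost_step' (hf : Continuous f)
    (hsq : (⋂ n : ℕ, Set.range (f^[n + 1])) = {ξ})
    (hα0 : 0 < α) (hα1 : α < 1) (M : ℕ) (u v : X) :
    α ^ M * (psi f ξ (rr f M) v - psi f ξ (rr f M) u) ≤ cost f ξ α u v := by
  rw [cost_comm]
  exact cost_step hf hsq hα0 hα1 M v u

lemma telescope_left (hf : Continuous f)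
    (hsq : (⋂ n : ℕ, Set.range (f^[n + 1])) = {ξ})
    (hα0 : 0 < α) (hα1 : α < 1) (M : ℕ) (z : ℕ → X) (a n : ℕ) :
    α ^ M * (psi f ξ (rr f M) (z a) - psi f ξ (rr f M) (z (a + n)))
      ≤ ∑ i ∈ Finset.Ico a (a + n), cost f ξ α (z i) (z (i + 1)) := by
  induction n with
  | zero => simp
  | succ n ih =>
    rw [show a + (n + 1) = a + n + 1 by omega,
      Finset.sum_Ico_succ_top (by omega : a ≤ a + n)]
    have hstep := cost_step hf hsq hα0 hα1 M (z (a + n)) (z (a + n + 1))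
    have hexp : α ^ M * (psi f ξ (rr f M) (z a) - psi f ξ (rr f M) (z (a + n + 1)))
        = α ^ M * (psi f ξ (rr f M) (z a) - psi f ξ (rr f M) (z (a + n)))
          + α ^ M * (psi f ξ (rr f M) (z (a + n)) - psi f ξ (rr f M) (z (a + n + 1))) := by
      ring
    rw [hexp]
    exact add_le_add ih hstep

lemma telescope_right (hf : Continuous f)
    (hsq : (⋂ n : ℕ, Set.range (f^[n + 1])) = {ξ})
    (hα0 : 0 < α) (hα1 : α < 1) (M : ℕ) (z : ℕ → X) (a n : ℕ) :
    α ^ M * (psi f ξ (rr f M) (z (a + n)) - psi f ξ (rr f M) (z a))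
      ≤ ∑ i ∈ Finset.Ico a (a + n), cost f ξ α (z i) (z (i + 1)) := by
  induction n with
  | zero => simp
  | succ n ih =>
    rw [show a + (n + 1) = a + n + 1 by omega,
      Finset.sum_Ico_succ_top (by omega : a ≤ a + n)]
    have hstep := cost_step' hf hsq hα0 hα1 M (z (a + n)) (z (a + n + 1))
    have hexp : α ^ M * (psi f ξ (rr f M) (z (a + n + 1)) - psi f ξ (rr f M) (z a))
        = α ^ M * (psi f ξ (rr f M) (z (a + n)) - psi f ξ (rr f M) (z a))
          + α ^ M * (psi f ξ (rr f M) (z (a + n + 1)) - psi f ξ (rr f M) (z (a + n))) := by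
      ring
    rw [hexp]
    exact add_le_add ih hstep

lemma min1_add (a b : ℝ) (ha : 0 ≤ a) (hb : 0 ≤ b) :
    min 1 (a + b) ≤ min 1 a + min 1 b := by
  rcases le_total 1 a with h | h
  · have hb' : 0 ≤ min 1 b := le_min zero_le_one hb
    calc min 1 (a + b) ≤ 1 := min_le_left _ _
      _ ≤ min 1 a + min 1 b := by rw [min_eq_left h]; linarith
  · rcases le_total 1 b with h' | h'
    · have ha' : 0 ≤ min 1 a := le_min zero_le_one ha
      calc min 1 (a + b) ≤ 1 := min_le_left _ _
        _ ≤ min 1 a + min 1 b := by rw [min_eq_left h']; linarith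
    · rw [min_eq_right h, min_eq_right h']
      exact min_le_right _ _

lemma min1_sum (g : ℕ → ℝ) (hg : ∀ i, 0 ≤ g i) (m : ℕ) :
    min 1 (∑ i ∈ Finset.range m, g i)
      ≤ ∑ i ∈ Finset.range m, min 1 (g i) := by
  induction m with
  | zero => simp
  | succ m ih =>
    rw [Finset.sum_range_succ, Finset.sum_range_succ]
    exact le_trans (min1_add _ _ (Finset.sum_nonneg fun i _ => hg i) (hg m))
      (add_le_add ih le_rfl)

lemma Dm_chain (z : ℕ → X) (m : ℕ) :
    Dm f (z 0) (z m) ≤ ∑ i ∈ Finset.range m, Dm f (z i) (z (i + 1)) := by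
  induction m with
  | zero => rw [Finset.sum_range_zero, Dm_self]
  | succ m ih =>
    rw [Finset.sum_range_succ]
    exact le_trans (Dm_triangle (z 0) (z m) (z (m + 1))) (add_le_add ih le_rfl)

lemma dJ_lower (hf : Continuous f)
    (hsq : (⋂ n : ℕ, Set.range (f^[n + 1])) = {ξ})
    (hα0 : 0 < α) (hα1 : α < 1) {t : ℝ} (ht : 0 < t) :
    ∃ c > 0, ∀ x y : X, t ≤ Dm f x y → c ≤ dJ f ξ α x y := by
  obtain ⟨M, hM⟩ := rr_small hf hsq (show (0:ℝ) < t / 4 by linarith)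
  refine ⟨α ^ M * min 1 (t / 4),
    mul_pos (pow_pos hα0 M) (lt_min one_pos (by linarith)), fun x y hxy => ?_⟩
  refine le_csInf (S_nonempty x y) ?_
  rintro c ⟨m, z, hz0, hzm, rfl⟩
  have hpowpos : (0:ℝ) ≤ α ^ M := (pow_pos hα0 M).le
  by_cases hdeep : ∃ j, j ≤ m ∧ z j ∈ V f ξ M
  · obtain ⟨j, hjm, hjV⟩ := hdeep
    have hψj : psi f ξ (rr f M) (z j) = 0 :=
      psi_eq_zero_of_le (Dm_le_rr_of_mem_V hf hsq hjV)
    have hpre := telescope_left hf hsq hα0 hα1 M z 0 j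
    have hsuf := telescope_right hf hsq hα0 hα1 M z j (m - j)
    rw [show j + (m - j) = m by omega] at hsuf
    simp only [Nat.zero_add, zero_add] at hpre
    rw [hz0, hψj, sub_zero] at hpre
    rw [hzm, hψj, sub_zero] at hsuf
    have hsplit : ∑ i ∈ Finset.range m, cost f ξ α (z i) (z (i + 1))
        = ∑ i ∈ Finset.Ico 0 j, cost f ξ α (z i) (z (i + 1))
          + ∑ i ∈ Finset.Ico j m, cost f ξ α (z i) (z (i + 1)) := by
      rw [Finset.range_eq_Ico, ← Finset.sum_Ico_consecutive _ (Nat.zero_le j) hjm]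
    have htri : Dm f x y ≤ Dm f x ξ + Dm f y ξ := by
      have h := Dm_triangle (f := f) x ξ y
      rw [Dm_comm (f := f) ξ y] at h
      exact h
    have hψx0 : (0:ℝ) ≤ α ^ M * psi f ξ (rr f M) x :=
      mul_nonneg hpowpos (psi_nonneg _ x)
    have hψy0 : (0:ℝ) ≤ α ^ M * psi f ξ (rr f M) y :=
      mul_nonneg hpowpos (psi_nonneg _ y)
    rw [hsplit]
    rcases le_total (t / 2) (Dm f x ξ) with hcase | hcase
    · have hbig : min 1 (t / 4) ≤ psi f ξ (rr f M) x := by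
        unfold psi
        exact min_le_min le_rfl (le_max_of_le_left (by linarith))
      have := mul_le_mul_of_nonneg_left hbig hpowpos
      linarith
    · have hy2 : t / 2 ≤ Dm f y ξ := by linarith
      have hbig : min 1 (t / 4) ≤ psi f ξ (rr f M) y := by
        unfold psi
        exact min_le_min le_rfl (le_max_of_le_left (by linarith))
      have := mul_le_mul_of_nonneg_left hbig hpowpos
      linarith
  · push_neg at hdeep
    have hstep : ∀ i ∈ Finset.range m,
        α ^ M * min 1 (Dm f (z i) (z (i + 1))) ≤ cost f ξ α (z i) (z (i + 1)) := by
      intro i hi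
      have hi' : i < m := Finset.mem_range.mp hi
      have hk : α ^ M ≤ kap f ξ α (z i) :=
        kap_ge_of_not_mem_V hα0 hα1 (hdeep i (by omega))
      exact mul_le_mul (le_trans hk (le_max_left _ _)) le_rfl
        (le_min zero_le_one (Dm_nonneg _ _))
        (le_trans (kap_nonneg hα0 (z i)) (le_max_left _ _))
    have hch : Dm f x y ≤ ∑ i ∈ Finset.range m, Dm f (z i) (z (i + 1)) := by
      have := Dm_chain (f := f) z m
      rw [hz0, hzm] at this
      exact this
    calc α ^ M * min 1 (t / 4)
        ≤ α ^ M * min 1 (∑ i ∈ Finset.range m, Dm f (z i) (z (i + 1))) :=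
          mul_le_mul_of_nonneg_left (min_le_min le_rfl (by linarith)) hpowpos
      _ ≤ α ^ M * ∑ i ∈ Finset.range m, min 1 (Dm f (z i) (z (i + 1))) :=
          mul_le_mul_of_nonneg_left (min1_sum _ (fun i => Dm_nonneg _ _) m) hpowpos
      _ = ∑ i ∈ Finset.range m, α ^ M * min 1 (Dm f (z i) (z (i + 1))) :=
          Finset.mul_sum _ _ _
      _ ≤ ∑ i ∈ Finset.range m, cost f ξ α (z i) (z (i + 1)) :=
          Finset.sum_le_sum hstep

end JanosAux

/-- Janoš: let `(X,ρ)` be a compact metric space and `f : X → X` continuous with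
`⋂_{n≥1} f^n(X) = {ξ}`. Then for every `α ∈ (0,1)` there is a metric on `X`,
topologically equivalent to `ρ`, with respect to which `f` is an `α`-contraction
(and `ξ` is the unique fixed point of `f`). -/
theorem janos_squeezing {X : Type*} [MetricSpace X] [CompactSpace X]
    (f : X → X) (hf : Continuous f) (ξ : X)
    (hsq : (⋂ n : ℕ, Set.range (f^[n + 1])) = {ξ}) :
    ∀ α : ℝ, 0 < α → α < 1 →
      ∃ m : MetricSpace X,
        m.toPseudoMetricSpace.toUniformSpace.toTopologicalSpace
          = (inferInstance : TopologicalSpace X) ∧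
        (∀ x y : X,
          @dist X m.toPseudoMetricSpace.toDist (f x) (f y)
            ≤ α * @dist X m.toPseudoMetricSpace.toDist x y) ∧
        f ξ = ξ ∧ ∀ x : X, f x = x → x = ξ := by
  intro α hα0 hα1
  have hfix := JanosAux.fixed_point hsq
  have huniq := JanosAux.fixed_point_unique hsq
  have H : ∀ s : Set X, IsOpen s ↔
      ∀ x ∈ s, ∃ ε > 0, ∀ y, JanosAux.dJ f ξ α x y < ε → y ∈ s := by
    intro s
    constructor
    · intro hs x hx
      obtain ⟨ε, hε, hball⟩ := Metric.isOpen_iff.mp hs x hx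
      obtain ⟨c, hc, hlow⟩ := JanosAux.dJ_lower hf hsq hα0 hα1 hε
      refine ⟨c, hc, fun y hy => ?_⟩
      apply hball
      rw [Metric.mem_ball, dist_comm]
      by_contra hge
      push_neg at hge
      exact absurd (hlow x y (le_trans hge (JanosAux.dist_le_Dm x y)))
        (not_le.mpr hy)
    · intro h
      refine Metric.isOpen_iff.mpr fun x hx => ?_
      obtain ⟨ε, hε, hd⟩ := h x hx
      obtain ⟨δ, hδ, hUC⟩ := JanosAux.Dm_UC hf hsq hε
      refine ⟨δ, hδ, fun y hy => ?_⟩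
      apply hd
      have h1 : dist x y < δ := by rwa [Metric.mem_ball, dist_comm] at hy
      exact lt_of_le_of_lt (JanosAux.dJ_le_Dm hα0 hα1 x y) (hUC x y h1)
  have hdef : ∀ x y : X, JanosAux.dJ f ξ α x y = 0 → x = y := by
    intro x y h0
    by_contra hne
    have hpos : 0 < dist x y := dist_pos.mpr hne
    obtain ⟨c, hc, hlow⟩ := JanosAux.dJ_lower hf hsq hα0 hα1 hpos
    have := hlow x y (JanosAux.dist_le_Dm x y)
    linarith
  refine ⟨MetricSpace.ofDistTopology (JanosAux.dJ f ξ α)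
    (JanosAux.dJ_self hα0) JanosAux.dJ_comm (JanosAux.dJ_triangle hα0) H hdef,
    ?_, ?_, hfix, huniq⟩
  · rfl
  · exact fun x y => JanosAux.dJ_contract hf hsq hα0 hα1 x y
end

section
/- A lattice (X,≤) is complete (every subset of X has a supremum and an infimum in X) if and only if every increasing mapping f : X → X has a fixed point. -/
open Set

/-- Zorn construction: in a meet-closed set `U` with no minimum, there is a
"dually well-ordered" chain `B ⊆ U` (every nonempty subset has a maximum)
such that no element of `U` is a lower bound of `B`. -/
lemma davis_exists_tower {X : Type*} [Lattice X] (U : Set X)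
    (hinf : ∀ u ∈ U, ∀ v ∈ U, u ⊓ v ∈ U)
    (hnomin : ¬ ∃ m ∈ U, ∀ u ∈ U, m ≤ u) :
    ∃ B, B ⊆ U ∧ (∀ T, T ⊆ B → T.Nonempty → ∃ m ∈ T, ∀ t ∈ T, t ≤ m) ∧
      lowerBounds B ∩ U = ∅ := by
  classical
  set C : Set (Set X) :=
    {B | B ⊆ U ∧ ∀ T, T ⊆ B → T.Nonempty → ∃ m ∈ T, ∀ t ∈ T, t ≤ m} with hCdef
  let r : {B // B ∈ C} → {B // B ∈ C} → Prop :=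
    fun B B' => B.1 ⊆ B'.1 ∧ ∀ x ∈ B'.1, x ∉ B.1 → ∀ y ∈ B.1, x ≤ y
  have rtrans : ∀ {a b c}, r a b → r b c → r a c := by
    rintro a b c ⟨hab, hab2⟩ ⟨hbc, hbc2⟩
    refine ⟨hab.trans hbc, fun x hx hxa y hy => ?_⟩
    by_cases hxb : x ∈ b.1
    · exact hab2 x hxb hxa y hy
    · exact hbc2 x hx hxb y (hab hy)
  have hchains : ∀ c, IsChain r c → ∃ ub, ∀ a ∈ c, r a ub := by
    intro c hc
    have hVC : (⋃ B ∈ c, (B : {B // B ∈ C}).1) ∈ C := by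
      constructor
      · intro x hx
        simp only [mem_iUnion] at hx
        obtain ⟨B, _, hxB⟩ := hx
        exact B.2.1 hxB
      · intro T hT hTne
        obtain ⟨t, ht⟩ := hTne
        have := hT ht
        simp only [mem_iUnion] at this
        obtain ⟨B, hBc, htB⟩ := this
        obtain ⟨m, hm, hmax⟩ := B.2.2 (T ∩ B.1) inter_subset_right ⟨t, ht, htB⟩
        refine ⟨m, hm.1, fun t' ht' => ?_⟩
        have := hT ht'
        simp only [mem_iUnion] at this
        obtain ⟨B', hB'c, ht'B'⟩ := this
        by_cases ht'B : t' ∈ B.1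
        · exact hmax t' ⟨ht', ht'B⟩
        · rcases eq_or_ne B' B with rfl | hne
          · exact absurd ht'B' ht'B
          · rcases hc hB'c hBc hne with h | h
            · exact absurd (h.1 ht'B') ht'B
            · exact h.2 t' ht'B' ht'B m hm.2
    refine ⟨⟨_, hVC⟩, fun B hB => ⟨fun x hx => ?_, fun x hx hxB y hy => ?_⟩⟩
    · exact mem_iUnion₂.2 ⟨B, hB, hx⟩
    · simp only [mem_iUnion] at hx
      obtain ⟨B', hB'c, hxB'⟩ := hx
      rcases eq_or_ne B' B with rfl | hne
      · exact absurd hxB' hxB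
      · rcases hc hB'c hB hne with h | h
        · exact absurd (h.1 hxB') hxB
        · exact h.2 x hxB' hxB y hy
  obtain ⟨M, hM⟩ := exists_maximal_of_chains_bounded hchains rtrans
  refine ⟨M.1, M.2.1, M.2.2, ?_⟩
  by_contra hne
  rw [← Ne, ← nonempty_iff_ne_empty] at hne
  obtain ⟨z, hz⟩ := hne
  -- `L := lowerBounds M ∩ U` has no minimum
  have hLnomin : ¬ ∃ m ∈ lowerBounds M.1 ∩ U, ∀ x ∈ lowerBounds M.1 ∩ U, m ≤ x := by
    rintro ⟨m, hm, hmin⟩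
    refine hnomin ⟨m, hm.2, fun u hu => ?_⟩
    have hmu : m ⊓ u ∈ lowerBounds M.1 ∩ U :=
      ⟨fun y hy => le_trans inf_le_left (hm.1 hy), hinf m hm.2 u hu⟩
    exact le_trans (hmin _ hmu) inf_le_right
  have hzmin : ¬ ∀ x ∈ lowerBounds M.1 ∩ U, z ≤ x := fun h => hLnomin ⟨z, hz, h⟩
  push_neg at hzmin
  obtain ⟨y, hy, hzy⟩ := hzmin
  set w := z ⊓ y with hw
  have hwL : w ∈ lowerBounds M.1 ∩ U :=
    ⟨fun t ht => le_trans inf_le_left (hz.1 ht), hinf z hz.2 y hy.2⟩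
  have hwM : w ∉ M.1 := by
    intro hmem
    exact hzy (le_trans (hz.1 hmem) inf_le_right)
  have hMC : insert w M.1 ∈ C := by
    constructor
    · exact insert_subset hwL.2 M.2.1
    · intro T hT hTne
      by_cases hTM : (T ∩ M.1).Nonempty
      · obtain ⟨m, hm, hmax⟩ := M.2.2 (T ∩ M.1) inter_subset_right hTM
        refine ⟨m, hm.1, fun t ht => ?_⟩
        rcases hT ht with rfl | htM
        · exact hwL.1 hm.2
        · exact hmax t ⟨ht, htM⟩
      · obtain ⟨t, ht⟩ := hTne
        have htw : t = w := by
          rcases hT ht with rfl | htM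
          · rfl
          · exact absurd ⟨t, ht, htM⟩ hTM
        refine ⟨t, ht, fun t' ht' => ?_⟩
        rcases hT ht' with rfl | ht'M
        · exact htw.ge
        · exact absurd ⟨t', ht', ht'M⟩ hTM
  have hrM : r M ⟨insert w M.1, hMC⟩ := by
    refine ⟨subset_insert _ _, fun x hx hxM y hy => ?_⟩
    rcases hx with rfl | hxM'
    · exact hwL.1 hy
    · exact absurd hxM' hxM
  have := (hM _ hrM).1
  exact hwM (this (mem_insert _ _))

/-- Dual form of `davis_exists_tower`. -/
lemma davis_exists_tower_up {X : Type*} [Lattice X] (D : Set X)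
    (hsup : ∀ u ∈ D, ∀ v ∈ D, u ⊔ v ∈ D)
    (hnomax : ¬ ∃ m ∈ D, ∀ d ∈ D, d ≤ m) :
    ∃ A, A ⊆ D ∧ (∀ T, T ⊆ A → T.Nonempty → ∃ m ∈ T, ∀ t ∈ T, m ≤ t) ∧
      upperBounds A ∩ D = ∅ := by
  obtain ⟨A, h1, h2, h3⟩ := davis_exists_tower (X := Xᵒᵈ) D
    (fun u hu v hv => hsup u hu v hv)
    (fun ⟨m, hm, h⟩ => hnomax ⟨m, hm, fun d hd => h d hd⟩)
  refine ⟨A, fun x hx => h1 hx, fun T hT hne => ?_, ?_⟩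
  · obtain ⟨m, hm, h⟩ := h2 T (fun x hx => hT hx) hne
    exact ⟨m, hm, fun t ht => h t ht⟩
  · rw [Set.eq_empty_iff_forall_notMem] at h3 ⊢
    intro x hx
    exact h3 x ⟨fun a ha => hx.1 ha, hx.2⟩

/-- The hard direction of Davis's theorem: the fixed point property implies
existence of least upper bounds. -/
lemma davis_exists_isLUB {X : Type*} [Lattice X]
    (fpp : ∀ f : X → X, Monotone f → ∃ x, f x = x) (S : Set X) :
    ∃ a, IsLUB S a := by
  classical
  by_contra hS
  push_neg at hS
  set U := upperBounds S with hU
  have hUinf : ∀ u ∈ U, ∀ v ∈ U, u ⊓ v ∈ U := fun u hu v hv =>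
    fun s hs => le_inf (hu hs) (hv hs)
  have hUnomin : ¬ ∃ m ∈ U, ∀ u ∈ U, m ≤ u := by
    rintro ⟨m, hm, h2⟩
    exact hS m ⟨hm, fun u hu => h2 u hu⟩
  obtain ⟨B, hBU, hBwo, hBgap⟩ := davis_exists_tower U hUinf hUnomin
  set D := lowerBounds B with hD
  have hSD : S ⊆ D := fun s hs b hb => hBU hb hs
  have hDsup : ∀ u ∈ D, ∀ v ∈ D, u ⊔ v ∈ D := fun u hu v hv =>
    fun b hb => sup_le (hu hb) (hv hb)
  have hDnomax : ¬ ∃ m ∈ D, ∀ d ∈ D, d ≤ m := by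
    rintro ⟨m, hm, h2⟩
    have hmU : m ∈ U := fun s hs => h2 s (hSD hs)
    exact (Set.eq_empty_iff_forall_notMem.mp hBgap m) ⟨hm, hmU⟩
  obtain ⟨A, hAD, hAwo', hAgap'⟩ := davis_exists_tower_up D hDsup hDnomax
  -- the counterexample map
  have key : ∀ x : X, ∃ y : X,
      ({a | a ∈ A ∧ ¬ a ≤ x}.Nonempty →
        y ∈ A ∧ ¬ y ≤ x ∧ ∀ t ∈ A, ¬ t ≤ x → y ≤ t) ∧
      (¬ {a | a ∈ A ∧ ¬ a ≤ x}.Nonempty →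
        y ∈ B ∧ ¬ x ≤ y ∧ ∀ t ∈ B, ¬ x ≤ t → t ≤ y) := by
    intro x
    by_cases hx : {a | a ∈ A ∧ ¬ a ≤ x}.Nonempty
    · obtain ⟨m, hm, hmin⟩ := hAwo' _ (fun a ha => ha.1) hx
      exact ⟨m, fun _ => ⟨hm.1, hm.2, fun t ht1 ht2 => hmin t ⟨ht1, ht2⟩⟩,
        fun h => absurd hx h⟩
    · have hxub : x ∈ upperBounds A := by
        intro a ha
        by_contra hax
        exact hx ⟨a, ha, hax⟩
      have hxD : x ∉ D := fun hxD =>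
        (Set.eq_empty_iff_forall_notMem.mp hAgap' x) ⟨hxub, hxD⟩
      have hTb : {b | b ∈ B ∧ ¬ x ≤ b}.Nonempty := by
        by_contra hb
        refine hxD (fun b hbB => ?_)
        by_contra hxb
        exact hb ⟨b, hbB, hxb⟩
      obtain ⟨m, hm, hmax⟩ := hBwo _ (fun b hb => hb.1) hTb
      exact ⟨m, fun h => absurd h hx,
        fun _ => ⟨hm.1, hm.2, fun t ht1 ht2 => hmax t ⟨ht1, ht2⟩⟩⟩
  choose f hf1 hf2 using key
  have hmono : Monotone f := by
    intro x y hxy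
    by_cases hx : {a | a ∈ A ∧ ¬ a ≤ x}.Nonempty
    · obtain ⟨hxA, hxle, hxmin⟩ := hf1 x hx
      by_cases hy : {a | a ∈ A ∧ ¬ a ≤ y}.Nonempty
      · obtain ⟨hyA, hyle, _⟩ := hf1 y hy
        exact hxmin _ hyA (fun h => hyle (h.trans hxy))
      · obtain ⟨hyB, _, _⟩ := hf2 y hy
        exact hAD hxA hyB
    · by_cases hy : {a | a ∈ A ∧ ¬ a ≤ y}.Nonempty
      · obtain ⟨hyA, hyle, _⟩ := hf1 y hy
        have : f y ≤ x := by
          by_contra h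
          exact hx ⟨f y, hyA, h⟩
        exact absurd (this.trans hxy) hyle
      · obtain ⟨hxB, hxle, _⟩ := hf2 x hx
        obtain ⟨_, _, hymax⟩ := hf2 y hy
        exact hymax _ hxB (fun h => hxle (hxy.trans h))
  obtain ⟨x, hfx⟩ := fpp f hmono
  by_cases hx : {a | a ∈ A ∧ ¬ a ≤ x}.Nonempty
  · exact (hf1 x hx).2.1 hfx.le
  · exact (hf2 x hx).2.1 hfx.ge

/-- Davis: a lattice `(X,≤)` is complete (every subset has a supremum and an infimum)
if and only if every increasing mapping `f : X → X` has a fixed point. -/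
theorem davis_lattice_complete_iff {X : Type*} [Lattice X] :
    (∀ S : Set X, (∃ a, IsLUB S a) ∧ (∃ b, IsGLB S b)) ↔
      ∀ f : X → X, Monotone f → ∃ x, f x = x := by
  constructor
  · -- Knaster–Tarski
    intro h f hf
    obtain ⟨a, ha⟩ := (h {x | f x ≤ x}).2
    have h1 : f a ≤ a := by
      refine ha.2 (fun x hx => ?_)
      exact le_trans (hf (ha.1 hx)) hx
    have h2 : a ≤ f a := ha.1 (show f (f a) ≤ f a from hf h1)
    exact ⟨a, le_antisymm h1 h2⟩
  · intro fpp S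
    refine ⟨davis_exists_isLUB fpp S, ?_⟩
    obtain ⟨a, ha⟩ := davis_exists_isLUB fpp (lowerBounds S)
    refine ⟨a, fun s hs => ha.2 (fun l hl => hl hs), fun l hl => ha.1 hl⟩
end

section
/- Let (X,ρ) be a metric space and define the partial order ⪯ on X × ℝ₊ by (x,α) ⪯ (y,β) ⟺ ρ(x,y) ≤ α − β. Then the following are equivalent: (1) the metric space X is complete; (2) every chain in (X × ℝ₊, ⪯) has a supremum; (3) every countable chain in (X × ℝ₊, ⪯) has a supremum; (4) every increasing sequence in (X × ℝ₊, ⪯) has a supremum. -/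
open scoped NNReal

/-- Ekeland's (Jachymski's) partial order on `X × ℝ₊`:
`(x,α) ⪯ (y,β) ⟺ ρ(x,y) ≤ α − β`. -/
def ekelandLE {X : Type*} [MetricSpace X] (p q : X × ℝ≥0) : Prop :=
  dist p.1 q.1 ≤ (p.2 : ℝ) - (q.2 : ℝ)

/-- `s` is a supremum of the set `C` with respect to the order `ekelandLE`. -/
def ekelandIsSup {X : Type*} [MetricSpace X] (C : Set (X × ℝ≥0)) (s : X × ℝ≥0) : Prop :=
  (∀ p ∈ C, ekelandLE p s) ∧ ∀ q : X × ℝ≥0, (∀ p ∈ C, ekelandLE p q) → ekelandLE s q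

lemma ekelandLE_refl {X : Type*} [MetricSpace X] (p : X × ℝ≥0) : ekelandLE p p := by
  simp [ekelandLE]

lemma ekelandLE_trans {X : Type*} [MetricSpace X] {p q r : X × ℝ≥0}
    (h1 : ekelandLE p q) (h2 : ekelandLE q r) : ekelandLE p r := by
  unfold ekelandLE at *
  calc dist p.1 r.1 ≤ dist p.1 q.1 + dist q.1 r.1 := dist_triangle _ _ _
  _ ≤ _ := by linarith

lemma ekeland_chain_dist {X : Type*} [MetricSpace X] {C : Set (X × ℝ≥0)}
    (hC : IsChain ekelandLE C) {p q : X × ℝ≥0} (hp : p ∈ C) (hq : q ∈ C) :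
    dist p.1 q.1 ≤ |(p.2 : ℝ) - (q.2 : ℝ)| := by
  rcases eq_or_ne p q with rfl | hne
  · simp
  rcases hC hp hq hne with h | h
  · exact h.trans (le_abs_self _)
  · rw [dist_comm]
    exact h.trans (by rw [abs_sub_comm]; exact le_abs_self _)

/-- (1) → (2): in a complete space every nonempty chain has a supremum. -/
lemma ekeland_sup_of_complete {X : Type*} [MetricSpace X] [CompleteSpace X]
    {C : Set (X × ℝ≥0)} (hCne : C.Nonempty) (hC : IsChain ekelandLE C) :
    ∃ s, ekelandIsSup C s := by
  obtain ⟨p0, hp0⟩ := hCne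
  set S : Set ℝ := (fun p : X × ℝ≥0 => (p.2 : ℝ)) '' C with hS
  have hSne : S.Nonempty := ⟨_, ⟨p0, hp0, rfl⟩⟩
  have hbdd : BddBelow S := ⟨0, by rintro x ⟨p, -, rfl⟩; exact p.2.coe_nonneg⟩
  set β := sInf S with hβ
  have hβle : ∀ p ∈ C, β ≤ (p.2 : ℝ) := fun p hp => csInf_le hbdd ⟨p, hp, rfl⟩
  have hβ0 : 0 ≤ β := le_csInf hSne (by rintro x ⟨p, -, rfl⟩; exact p.2.coe_nonneg)
  have hseq : ∀ n : ℕ, ∃ p, p ∈ C ∧ ((p.2 : ℝ)) < β + 1 / (n + 1) := by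
    intro n
    have hpos : β < β + 1 / (n + 1 : ℝ) := by
      have : (0:ℝ) < 1 / (n + 1 : ℝ) := by positivity
      linarith
    obtain ⟨x, ⟨p, hp, rfl⟩, hx⟩ := exists_lt_of_csInf_lt hSne hpos
    exact ⟨p, hp, hx⟩
  choose u hu h2u using hseq
  have h1u : ∀ n, β ≤ ((u n).2 : ℝ) := fun n => hβle _ (hu n)
  have htend : Filter.Tendsto (fun n => ((u n).2 : ℝ)) Filter.atTop (nhds β) := by
    have h0 : Filter.Tendsto (fun n : ℕ => β + 1 / (n + 1 : ℝ)) Filter.atTop (nhds (β + 0)) :=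
      Filter.Tendsto.const_add _ tendsto_one_div_add_atTop_nhds_zero_nat
    rw [add_zero] at h0
    refine tendsto_of_tendsto_of_tendsto_of_le_of_le tendsto_const_nhds h0 h1u
      (fun n => (h2u n).le)
  have hcauchy : CauchySeq (fun n => (u n).1) := by
    refine cauchySeq_of_le_tendsto_0 (fun N => 1 / (N + 1 : ℝ)) ?_
      tendsto_one_div_add_atTop_nhds_zero_nat
    intro n m N hn hm
    have h1 : (1 : ℝ) / (n + 1) ≤ 1 / (N + 1) := by
      apply one_div_le_one_div_of_le (by positivity)
      exact_mod_cast by omega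
    have h2 : (1 : ℝ) / (m + 1) ≤ 1 / (N + 1) := by
      apply one_div_le_one_div_of_le (by positivity)
      exact_mod_cast by omega
    refine (ekeland_chain_dist hC (hu n) (hu m)).trans ?_
    show |((u n).2 : ℝ) - ((u m).2 : ℝ)| ≤ 1 / ((N : ℝ) + 1)
    rw [abs_le]
    refine ⟨?_, ?_⟩
    · have := h2u m; have := h1u n; linarith
    · have := h2u n; have := h1u m; linarith
  obtain ⟨x, hx⟩ := cauchySeq_tendsto_of_complete hcauchy
  refine ⟨(x, ⟨β, hβ0⟩), ?_, ?_⟩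
  · intro p hp
    show dist p.1 x ≤ (p.2 : ℝ) - β
    have ha : Filter.Tendsto (fun n => dist p.1 (u n).1) Filter.atTop (nhds (dist p.1 x)) :=
      (Continuous.tendsto (continuous_const.dist continuous_id) x).comp hx
    have hb : Filter.Tendsto (fun n => |(p.2 : ℝ) - ((u n).2 : ℝ)|) Filter.atTop
        (nhds |(p.2 : ℝ) - β|) := by
      exact ((continuous_abs.tendsto _).comp ((tendsto_const_nhds).sub htend))
    rw [abs_of_nonneg (by linarith [hβle p hp])] at hb
    exact le_of_tendsto_of_tendsto' ha hb (fun n => ekeland_chain_dist hC hp (hu n))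
  · intro q hq
    show dist x q.1 ≤ β - (q.2 : ℝ)
    have ha : Filter.Tendsto (fun n => dist (u n).1 q.1) Filter.atTop (nhds (dist x q.1)) :=
      (Continuous.tendsto (continuous_id.dist continuous_const) x).comp hx
    have hb : Filter.Tendsto (fun n => ((u n).2 : ℝ) - (q.2 : ℝ)) Filter.atTop
        (nhds (β - (q.2 : ℝ))) := htend.sub tendsto_const_nhds
    exact le_of_tendsto_of_tendsto' ha hb (fun n => hq _ (hu n))

/-- Jachymski: for a metric space `(X,ρ)` and the order `⪯` on `X × ℝ₊` defined by
`(x,α) ⪯ (y,β) ⟺ ρ(x,y) ≤ α − β`, the following are equivalent: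
(1) `X` is complete; (2) every chain in `(X × ℝ₊,⪯)` has a supremum;
(3) every countable chain has a supremum; (4) every increasing sequence has a
supremum. -/
theorem jachymski_order_complete_tfae {X : Type*} [MetricSpace X] :
    List.TFAE
      [ CompleteSpace X,
        ∀ C : Set (X × ℝ≥0), C.Nonempty → IsChain ekelandLE C →
          ∃ s, ekelandIsSup C s,
        ∀ C : Set (X × ℝ≥0), C.Nonempty → C.Countable → IsChain ekelandLE C →
          ∃ s, ekelandIsSup C s,
        ∀ u : ℕ → X × ℝ≥0, (∀ n, ekelandLE (u n) (u (n + 1))) →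
          ∃ s, ekelandIsSup (Set.range u) s ] := by
  tfae_have 1 → 2 := by
    intro h C hne hC
    exact ekeland_sup_of_complete hne hC
  tfae_have 2 → 3 := fun h C h1 _ h2 => h C h1 h2
  tfae_have 3 → 4 := by
    intro h u hu
    have hmono : ∀ i j, i ≤ j → ekelandLE (u i) (u j) := by
      intro i j hij
      induction j with
      | zero => obtain rfl : i = 0 := Nat.le_zero.1 hij; exact ekelandLE_refl _
      | succ j ih =>
        rcases Nat.lt_or_ge i (j + 1) with h' | h'
        · exact ekelandLE_trans (ih (Nat.lt_succ_iff.1 h')) (hu j)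
        · have : i = j + 1 := le_antisymm hij h'
          exact this ▸ ekelandLE_refl _
    refine h _ (Set.range_nonempty u) (Set.countable_range u) ?_
    rintro - ⟨i, rfl⟩ - ⟨j, rfl⟩ -
    rcases le_total i j with hij | hij
    · exact Or.inl (hmono _ _ hij)
    · exact Or.inr (hmono _ _ hij)
  tfae_have 4 → 1 := by
    intro h4
    refine Metric.complete_of_cauchySeq_tendsto fun f hf => ?_
    obtain ⟨N, hN⟩ : ∃ N : ℕ → ℕ, ∀ k, ∀ m ≥ N k, ∀ n ≥ N k,
        dist (f m) (f n) < (1 / 2 : ℝ) ^ (k + 1) := by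
      have h := Metric.cauchySeq_iff.1 hf
      choose N hN using fun k => h ((1 / 2 : ℝ) ^ (k + 1)) (by positivity)
      exact ⟨N, hN⟩
    set φ : ℕ → ℕ := fun k => Nat.rec (N 0) (fun k ih => max (ih + 1) (N (k + 1))) k with hφ
    have hφN : ∀ k, N k ≤ φ k := by
      intro k
      cases k with
      | zero => exact le_refl _
      | succ k => exact le_max_right _ _
    have hφmono : StrictMono φ := by
      apply strictMono_nat_of_lt_succ
      intro k
      exact lt_of_lt_of_le (Nat.lt_succ_self _) (le_max_left _ _)
    set v : ℕ → X × ℝ≥0 := fun k => (f (φ k), (1 / 2 : ℝ≥0) ^ k) with hv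
    have hvc : ∀ k : ℕ, ((((1 / 2 : ℝ≥0) ^ k : ℝ≥0)) : ℝ) = (1 / 2 : ℝ) ^ k := by
      intro k; push_cast; norm_num
    have hvincr : ∀ k, ekelandLE (v k) (v (k + 1)) := by
      intro k
      show dist (f (φ k)) (f (φ (k + 1))) ≤
        ((((1 / 2 : ℝ≥0) ^ k : ℝ≥0)) : ℝ) - ((((1 / 2 : ℝ≥0) ^ (k + 1) : ℝ≥0)) : ℝ)
      rw [hvc, hvc]
      have hd : dist (f (φ k)) (f (φ (k + 1))) < (1 / 2 : ℝ) ^ (k + 1) :=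
        hN k _ (hφN k) _ (le_trans (hφN k) (le_of_lt (hφmono (Nat.lt_succ_self k))))
      have he : (1 / 2 : ℝ) ^ (k + 1) = (1 / 2 : ℝ) ^ k - (1 / 2 : ℝ) ^ (k + 1) := by
        rw [pow_succ]; ring
      linarith [he ▸ hd]
    obtain ⟨s, hs, -⟩ := h4 v hvincr
    have hdist : ∀ k, dist (f (φ k)) s.1 ≤ (1 / 2 : ℝ) ^ k := by
      intro k
      have h2 : (0 : ℝ) ≤ s.2 := s.2.coe_nonneg
      have h1 : dist (f (φ k)) s.1 ≤ ((((1 / 2 : ℝ≥0) ^ k : ℝ≥0)) : ℝ) - (s.2 : ℝ) :=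
        hs (v k) ⟨k, rfl⟩
      rw [hvc] at h1
      linarith
    have htend : Filter.Tendsto (fun k => f (φ k)) Filter.atTop (nhds s.1) := by
      rw [tendsto_iff_dist_tendsto_zero]
      refine squeeze_zero (fun k => dist_nonneg) hdist ?_
      exact tendsto_pow_atTop_nhds_zero_of_lt_one (by norm_num) (by norm_num)
    exact ⟨s.1, tendsto_nhds_of_cauchySeq_of_subseq hf hφmono.tendsto_atTop htend⟩
  tfae_finish
end

section
/- Let (X,ρ) be a complete metric space equipped with a partial order ≤ such that every pair of elements of X has an upper bound or a lower bound with respect to ≤. Let f : X → X be continuous, monotone (either increasing or decreasing) with respect to ≤, and suppose there exists α ∈ [0,1) such that ρ(f(x), f(y)) ≤ α·ρ(x,y) whenever x and y are comparable (x ≤ y or y ≤ x). If there exists x₀ ∈ X with x₀ ≤ f(x₀) or f(x₀) ≤ x₀, then f has a unique fixed point x̄, and for every x ∈ X the sequence (f^n(x)) converges to x̄. -/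
/-- Ran–Reurings: let `(X,ρ)` be a complete metric space with a partial order `≤` such
that every pair of elements has an upper bound or a lower bound. If `f : X → X` is
continuous, monotone (increasing or decreasing), an `α`-contraction (`α < 1`) on
comparable pairs, and `x₀ ≤ f x₀` or `f x₀ ≤ x₀` for some `x₀`, then `f` has a unique
fixed point `x̄` and `f^[n] x → x̄` for every `x ∈ X`. -/
theorem ran_reurings {X : Type*} [MetricSpace X] [CompleteSpace X] [PartialOrder X]
    (hbound : ∀ x y : X, (∃ z, x ≤ z ∧ y ≤ z) ∨ (∃ z, z ≤ x ∧ z ≤ y))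
    (f : X → X) (hcont : Continuous f) (hmono : Monotone f ∨ Antitone f)
    (α : ℝ) (hα0 : 0 ≤ α) (hα1 : α < 1)
    (hcontr : ∀ x y : X, (x ≤ y ∨ y ≤ x) → dist (f x) (f y) ≤ α * dist x y)
    (x₀ : X) (hx₀ : x₀ ≤ f x₀ ∨ f x₀ ≤ x₀) :
    ∃ xbar : X, f xbar = xbar ∧ (∀ y : X, f y = y → y = xbar) ∧
      ∀ x : X, Filter.Tendsto (fun n => f^[n] x) Filter.atTop (nhds xbar) := by
  have hCf : ∀ x y : X, (x ≤ y ∨ y ≤ x) → (f x ≤ f y ∨ f y ≤ f x) := by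
    rcases hmono with h | h
    · intro x y hxy; rcases hxy with h' | h'
      exacts [Or.inl (h h'), Or.inr (h h')]
    · intro x y hxy; rcases hxy with h' | h'
      exacts [Or.inr (h h'), Or.inl (h h')]
  have hCiter : ∀ n (x y : X), (x ≤ y ∨ y ≤ x) →
      (f^[n] x ≤ f^[n] y ∨ f^[n] y ≤ f^[n] x) := by
    intro n
    induction n with
    | zero => intro x y h; simpa using h
    | succ n ih =>
      intro x y h
      simp only [Function.iterate_succ', Function.comp_apply]
      exact hCf _ _ (ih x y h)
  have hdist : ∀ n (x y : X), (x ≤ y ∨ y ≤ x) →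
      dist (f^[n] x) (f^[n] y) ≤ α ^ n * dist x y := by
    intro n
    induction n with
    | zero => intro x y h; simp
    | succ n ih =>
      intro x y h
      simp only [Function.iterate_succ', Function.comp_apply]
      calc dist (f (f^[n] x)) (f (f^[n] y)) ≤ α * dist (f^[n] x) (f^[n] y) :=
            hcontr _ _ (hCiter n x y h)
        _ ≤ α * (α ^ n * dist x y) := mul_le_mul_of_nonneg_left (ih x y h) hα0
        _ = α ^ (n + 1) * dist x y := by ring
  have hcau : CauchySeq (fun n => f^[n] x₀) := by
    apply cauchySeq_of_le_geometric α (dist x₀ (f x₀)) hα1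
    intro n
    calc dist (f^[n] x₀) (f^[n + 1] x₀) = dist (f^[n] x₀) (f^[n] (f x₀)) := by
          rw [Function.iterate_succ_apply]
      _ ≤ α ^ n * dist x₀ (f x₀) := hdist n x₀ (f x₀) hx₀
      _ = dist x₀ (f x₀) * α ^ n := by ring
  obtain ⟨xbar, hxbar⟩ := cauchySeq_tendsto_of_complete hcau
  have hfix : f xbar = xbar := by
    have h1 : Filter.Tendsto (fun n => f (f^[n] x₀)) Filter.atTop (nhds (f xbar)) :=
      (hcont.tendsto xbar).comp hxbar
    have h2 : Filter.Tendsto (fun n => f (f^[n] x₀)) Filter.atTop (nhds xbar) := by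
      have := hxbar.comp (Filter.tendsto_add_atTop_nat 1)
      simpa [Function.comp_def, Function.iterate_succ_apply'] using this
    exact tendsto_nhds_unique h1 h2
  have htend : ∀ x : X, Filter.Tendsto (fun n => f^[n] x) Filter.atTop (nhds xbar) := by
    intro x
    obtain ⟨z, hz1, hz2⟩ : ∃ z : X, (x ≤ z ∨ z ≤ x) ∧ (x₀ ≤ z ∨ z ≤ x₀) := by
      rcases hbound x x₀ with ⟨z, h1, h2⟩ | ⟨z, h1, h2⟩
      · exact ⟨z, Or.inl h1, Or.inl h2⟩
      · exact ⟨z, Or.inr h1, Or.inr h2⟩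
    rw [tendsto_iff_dist_tendsto_zero]
    apply squeeze_zero (fun n => dist_nonneg)
      (g := fun n => α ^ n * dist x z + α ^ n * dist x₀ z + dist (f^[n] x₀) xbar)
    · intro n
      calc dist (f^[n] x) xbar
          ≤ dist (f^[n] x) (f^[n] z) + dist (f^[n] z) (f^[n] x₀) + dist (f^[n] x₀) xbar :=
            dist_triangle4 _ _ _ _
        _ ≤ α ^ n * dist x z + α ^ n * dist x₀ z + dist (f^[n] x₀) xbar := by
            have h1 := hdist n x z hz1
            have h2 := hdist n x₀ z hz2
            rw [dist_comm (f^[n] z) (f^[n] x₀)]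
            linarith
    · have hpow : Filter.Tendsto (fun n : ℕ => α ^ n) Filter.atTop (nhds 0) :=
        tendsto_pow_atTop_nhds_zero_of_lt_one hα0 hα1
      have hd0 : Filter.Tendsto (fun n => dist (f^[n] x₀) xbar) Filter.atTop (nhds 0) :=
        tendsto_iff_dist_tendsto_zero.mp hxbar
      have := ((hpow.mul_const (dist x z)).add (hpow.mul_const (dist x₀ z))).add hd0
      simpa using this
  refine ⟨xbar, hfix, ?_, htend⟩
  intro y hy
  have : Filter.Tendsto (fun n : ℕ => y) Filter.atTop (nhds xbar) := by
    have := htend y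
    simpa [Function.iterate_fixed hy] using this
  exact tendsto_nhds_unique tendsto_const_nhds this
end
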